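/- arXiv:1705.09799 — 4 statements merged into one kernel-verified Lean document; each statement's English description precedes it below -/
import Mathlib

section
/- Let S ⊆ S' be saturated multiplicatively closed subsets of R, let s' ∈ S' \ (S ∪ Ann(M)) and 0 ≠ m ∈ M be such that s' is α (for some α among irreducible, strongly irreducible, very strongly irreducible) and m is S'-β (for some β among primitive, strongly primitive, very strongly primitive). If M is semi-S-factorable, then m is S-primitive. If S splits M and S' \ Ann(M) is compactly S-atomic (as a subset of the R-module R), then s' is S-primitive. -/
namespace FactorizationPaper

variable {R : Type*} [CommRing R]

/-- `S` is a saturated multiplicatively closed subset of `R`: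
it contains `1`, is closed under multiplication, and `x*y ∈ S` implies `x ∈ S` and `y ∈ S`. -/
def Saturated (S : Set R) : Prop :=
  1 ∈ S ∧ (∀ x ∈ S, ∀ y ∈ S, x * y ∈ S) ∧ ∀ x y : R, x * y ∈ S → x ∈ S ∧ y ∈ S

/-- The submonoid of `R` associated to a saturated multiplicatively closed set. -/
def Saturated.submonoid {S : Set R} (hS : Saturated S) : Submonoid R where
  carrier := S
  one_mem' := hS.1
  mul_mem' := fun {a b} ha hb => hS.2.1 a ha b hb

section ElementDefs

variable (S : Set R) {N : Type*} [AddCommGroup N] [Module R N]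

/-- `m ∼^S n` : `m` and `n` are S-associates. -/
def SAssoc (m n : N) : Prop := (∃ s ∈ S, m = s • n) ∧ (∃ s ∈ S, n = s • m)

/-- `m ≈^S n` : `m` and `n` are S-strong associates. -/
def SStrongAssoc (m n : N) : Prop := ∃ u : R, IsUnit u ∧ u ∈ S ∧ m = u • n

/-- `m ≅^S n` : `m` and `n` are S-very strong associates. -/
def SVeryStrongAssoc (m n : N) : Prop :=
  SAssoc S m n ∧ ((m = 0 ∧ n = 0) ∨ ∀ s ∈ S, m = s • n → IsUnit s)

/-- `m` is S-primitive. -/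
def SPrimitive (m : N) : Prop := ∀ s ∈ S, ∀ n : N, m = s • n → SAssoc S n m

/-- `m` is S-strongly primitive. -/
def SStronglyPrimitive (m : N) : Prop := ∀ s ∈ S, ∀ n : N, m = s • n → SStrongAssoc S n m

/-- `m` is S-very strongly primitive. -/
def SVeryStronglyPrimitive (m : N) : Prop := ∀ s ∈ S, ∀ n : N, m = s • n → SVeryStrongAssoc S n m

/-- the three kinds of S-primitivity, indexed by `Fin 3` :
`0` = primitive, `1` = strongly primitive, `2` = very strongly primitive. -/
def PrimOf (k : Fin 3) (m : N) : Prop :=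
  match k with
  | 0 => SPrimitive S m
  | 1 => SStronglyPrimitive S m
  | 2 => SVeryStronglyPrimitive S m

/-- `m = s • n` is a compact S-atomic factorization of `m`. -/
def IsCompactFactorization (m : N) (s : R) (n : N) : Prop :=
  s ∈ S ∧ SPrimitive S n ∧ m = s • n

/-- `m = s₁ ⋯ s_k • n` (with the `sᵢ` the members of the list `l`, nonunits in `S`)
is an S-factorization of `m`, of length `l.length`. -/
def IsSFactorization (m : N) (l : List R) (n : N) : Prop :=
  (∀ s ∈ l, s ∈ S ∧ ¬ IsUnit s) ∧ m = l.prod • n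

end ElementDefs

/-- `a ∼ b` : associates in `R` (i.e. S-associates with `S = R`, in `R` as an `R`-module). -/
def Assoc (a b : R) : Prop := SAssoc (Set.univ : Set R) a b

/-- `a ≈ b` : strong associates in `R`. -/
def StrongAssoc (a b : R) : Prop := SStrongAssoc (Set.univ : Set R) a b

/-- `a ≅ b` : very strong associates in `R`. -/
def VeryStrongAssoc (a b : R) : Prop := SVeryStrongAssoc (Set.univ : Set R) a b

/-- `a` is irreducible. -/
def Irred (a : R) : Prop := ¬ IsUnit a ∧ ∀ b c : R, a = b * c → Assoc a b ∨ Assoc a c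

/-- `a` is strongly irreducible. -/
def StrongIrred (a : R) : Prop :=
  ¬ IsUnit a ∧ ∀ b c : R, a = b * c → StrongAssoc a b ∨ StrongAssoc a c

/-- `a` is very strongly irreducible. -/
def VeryStrongIrred (a : R) : Prop :=
  ¬ IsUnit a ∧ ∀ b c : R, a = b * c → VeryStrongAssoc a b ∨ VeryStrongAssoc a c

/-- the three kinds of irreducibility, indexed by `Fin 3` :
`0` = irreducible, `1` = strongly irreducible, `2` = very strongly irreducible. -/
def IrredOf (k : Fin 3) (a : R) : Prop :=
  match k with
  | 0 => Irred a
  | 1 => StrongIrred a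
  | 2 => VeryStrongIrred a

section ElementDefs2

variable (S : Set R) {N : Type*} [AddCommGroup N] [Module R N]

/-- `m = s₁ ⋯ s_k • n` is an S-atomic factorization
(each `sᵢ` irreducible and in `S`, `n` S-primitive). -/
def IsSAtomicFactorization (m : N) (l : List R) (n : N) : Prop :=
  IsSFactorization S m l n ∧ (∀ s ∈ l, Irred s) ∧ SPrimitive S n

/-- an (α, β)-S-factorization: each `sᵢ` is α (a kind of irreducible)
and `n` is S-β (a kind of S-primitive). -/
def IsABFactorization (kα kβ : Fin 3) (m : N) (l : List R) (n : N) : Prop :=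
  IsSFactorization S m l n ∧ (∀ s ∈ l, IrredOf kα s) ∧ PrimOf S kβ n

/-- Isomorphism of S-atomic factorizations: same length, S-associate primitive parts,
and the irreducible parts match up to permutation and associates. -/
def FactorIso (l : List R) (n : N) (l' : List R) (n' : N) : Prop :=
  l.length = l'.length ∧ SAssoc S n n' ∧
    ∃ l'' : List R, l'.Perm l'' ∧ List.Forall₂ Assoc l l''

end ElementDefs2

section SetDefs

variable (S : Set R) {N : Type*} [AddCommGroup N] [Module R N]

/-- `E ⊆ N` is compactly S-atomic. -/
def CompactlySAtomic (E : Set N) : Prop :=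
  ∀ m ∈ E, m ≠ 0 → ∃ s n, IsCompactFactorization S m s n

/-- `E ⊆ N` is semi-S-factorable. -/
def SemiSFactorable (E : Set N) : Prop :=
  CompactlySAtomic S E ∧ ∀ m ∈ E, m ≠ 0 → ∀ s n s' n',
    IsCompactFactorization S m s n → IsCompactFactorization S m s' n' → Assoc s s'

/-- `E ⊆ N` is S-factorable. -/
def SFactorable (E : Set N) : Prop :=
  SemiSFactorable S E ∧ ∀ m ∈ E, m ≠ 0 → ∀ s n s' n',
    IsCompactFactorization S m s n → IsCompactFactorization S m s' n' → SAssoc S n n'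

/-- `S` splits `E ⊆ N`. -/
def Splits (E : Set N) : Prop :=
  SemiSFactorable S E ∧
    ∀ r : R, SPrimitive S r → ∀ m : N, SPrimitive S m →
      r • m ≠ 0 → r • m ∈ E → SPrimitive S (r • m)

end SetDefs

/-- The set of zero divisors of the module `M` in `R`. -/
def ZDiv (R : Type*) [CommRing R] (M : Type*) [AddCommGroup M] [Module R M] : Set R :=
  {r : R | ∃ m : M, m ≠ 0 ∧ r • m = 0}

/-- The annihilator of `M` in `R`, as a set. -/
def AnnSet (R : Type*) [CommRing R] (M : Type*) [AddCommGroup M] [Module R M] : Set R :=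
  {r : R | ∀ m : M, r • m = 0}

/-- The annihilator of `M` in `R`, as an ideal. -/
def AnnIdeal (R : Type*) [CommRing R] (M : Type*) [AddCommGroup M] [Module R M] : Ideal R where
  carrier := AnnSet R M
  zero_mem' := fun m => zero_smul R m
  add_mem' := fun {a b} ha hb m => by
    rw [add_smul, ha m, hb m, add_zero]
  smul_mem' := fun c x hx m => by
    rw [smul_eq_mul, mul_smul, hx m, smul_zero]

section ModuleProps

variable (S : Set R) (N : Type*) [AddCommGroup N] [Module R N]

/-- `N` is S-présimplifiable. -/
def SPresimplifiable : Prop := ∀ s ∈ S, ∀ m : N, s • m = m → IsUnit s ∨ m = 0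

/-- `N` is S-atomic. -/
def SAtomicModule : Prop := ∀ m : N, m ≠ 0 → ∃ l n, IsSAtomicFactorization S m l n

/-- `N` is (α, β)-S-atomic. -/
def ABAtomicModule (kα kβ : Fin 3) : Prop :=
  ∀ m : N, m ≠ 0 → ∃ l n, IsABFactorization S kα kβ m l n

/-- `N` is an S-UFM. -/
def SUFM : Prop := SAtomicModule S N ∧ ∀ m : N, m ≠ 0 → ∀ l n l' n',
  IsSAtomicFactorization S m l n → IsSAtomicFactorization S m l' n' → FactorIso S l n l' n'

/-- `N` is an S-FFM. -/
def SFFM : Prop := SAtomicModule S N ∧ ∀ m : N, m ≠ 0 →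
  ∃ Fs : Set (List R × N), Fs.Finite ∧
    ∀ l n, IsSAtomicFactorization S m l n → ∃ p ∈ Fs, FactorIso S l n p.1 p.2

/-- `N` is an S-BFM. -/
def SBFM : Prop := ∀ m : N, m ≠ 0 → ∃ B : ℕ,
  ∀ l n, IsSFactorization S m l n → l.length ≤ B

/-- `N` is an S-HFM. -/
def SHFM : Prop := SAtomicModule S N ∧ ∀ m : N, m ≠ 0 → ∀ l n l' n',
  IsSAtomicFactorization S m l n → IsSAtomicFactorization S m l' n' → l.length = l'.length

end ModuleProps

section InE

variable (E : Set R)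

/-- `R` is présimplifiable in `E`. -/
def PresimpIn : Prop := ∀ a ∈ E, a ≠ 0 → ¬ IsUnit a → ∀ r : R, a = r * a → IsUnit r ∨ a = 0

/-- `R` is atomic in `E`. -/
def AtomicIn : Prop := ∀ a ∈ E, a ≠ 0 → ¬ IsUnit a →
  ∃ l n, IsSAtomicFactorization (Set.univ : Set R) a l n

/-- `R` has unique factorization in `E`. -/
def UFIn : Prop := AtomicIn E ∧ ∀ a ∈ E, a ≠ 0 → ¬ IsUnit a → ∀ l n l' n',
  IsSAtomicFactorization (Set.univ : Set R) a l n →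
  IsSAtomicFactorization (Set.univ : Set R) a l' n' →
  FactorIso (Set.univ : Set R) l n l' n'

/-- `R` has finite factorization in `E`. -/
def FFIn : Prop := AtomicIn E ∧ ∀ a ∈ E, a ≠ 0 → ¬ IsUnit a →
  ∃ Fs : Set (List R × R), Fs.Finite ∧ ∀ l n,
    IsSAtomicFactorization (Set.univ : Set R) a l n →
      ∃ p ∈ Fs, FactorIso (Set.univ : Set R) l n p.1 p.2

/-- `R` is half factorial in `E`. -/
def HFIn : Prop := AtomicIn E ∧ ∀ a ∈ E, a ≠ 0 → ¬ IsUnit a → ∀ l n l' n',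
  IsSAtomicFactorization (Set.univ : Set R) a l n →
  IsSAtomicFactorization (Set.univ : Set R) a l' n' → l.length = l'.length

/-- `R` has bounded factorization in `E`. -/
def BFIn : Prop := ∀ a ∈ E, a ≠ 0 → ¬ IsUnit a →
  ∃ B : ℕ, ∀ l n, IsSFactorization (Set.univ : Set R) a l n → l.length ≤ B

end InE

/-- The set `T = S⁻¹S'` in the localization `R_S`. -/
def locT {S : Set R} (hS : Saturated S) (S' : Set R) : Set (Localization hS.submonoid) :=
  {x | ∃ s' ∈ S', ∃ t : hS.submonoid, x = Localization.mk s' t}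

section DomainDefs

variable (D : Type*) [CommRing D]

/-- two lists of ring elements agree up to order and associates. -/
def ListAssociated (l l' : List D) : Prop :=
  ∃ l'' : List D, l'.Perm l'' ∧ List.Forall₂ Associated l l''

/-- `D` is atomic: every nonzero nonunit is a finite product of irreducibles. -/
def DomAtomic : Prop := ∀ x : D, x ≠ 0 → ¬ IsUnit x →
  ∃ l : List D, (∀ a ∈ l, Irreducible a) ∧ x = l.prod

/-- `D` is a bounded factorization domain. -/
def DomBFD : Prop := ∀ x : D, x ≠ 0 → ¬ IsUnit x →
  ∃ B : ℕ, ∀ l : List D, (∀ a ∈ l, ¬ IsUnit a) → x = l.prod → l.length ≤ B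

/-- `D` is a half factorial domain. -/
def DomHFD : Prop := DomAtomic D ∧ ∀ x : D, x ≠ 0 → ¬ IsUnit x →
  ∀ l l' : List D, (∀ a ∈ l, Irreducible a) → x = l.prod →
    (∀ a ∈ l', Irreducible a) → x = l'.prod → l.length = l'.length

/-- `D` is a finite factorization domain. -/
def DomFFD : Prop := DomAtomic D ∧ ∀ x : D, x ≠ 0 → ¬ IsUnit x →
  ∃ Fs : Set (List D), Fs.Finite ∧ ∀ l : List D, (∀ a ∈ l, Irreducible a) → x = l.prod →
    ∃ l' ∈ Fs, ListAssociated D l l'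

/-- `D` is a unique factorization domain. -/
def DomUFD : Prop := DomAtomic D ∧ ∀ x : D, x ≠ 0 → ¬ IsUnit x →
  ∀ l l' : List D, (∀ a ∈ l, Irreducible a) → x = l.prod →
    (∀ a ∈ l', Irreducible a) → x = l'.prod → ListAssociated D l l'

end DomainDefs

section AXBXdefs

variable (B : Type*) [CommRing B] (A : Subring B)

/-- The ring `R = A + X·B[X]`, as a subring of `B[X]`. -/
def AXBX : Subring (Polynomial B) where
  carrier := {f | f.coeff 0 ∈ A}
  zero_mem' := by simp only [Set.mem_setOf_eq, Polynomial.coeff_zero]; exact zero_mem A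
  one_mem' := by
    simp only [Set.mem_setOf_eq, Polynomial.coeff_one, if_pos rfl]
    exact one_mem A
  add_mem' := fun {f g} hf hg => by
    simp only [Set.mem_setOf_eq, Polynomial.coeff_add] at *
    exact add_mem hf hg
  neg_mem' := fun {f} hf => by
    simp only [Set.mem_setOf_eq, Polynomial.coeff_neg] at *
    exact neg_mem hf
  mul_mem' := fun {f g} hf hg => by
    simp only [Set.mem_setOf_eq, Polynomial.mul_coeff_zero] at *
    exact mul_mem hf hg

/-- The saturated multiplicatively closed subset `S = (U(B) ∩ A) ∪ {u·Xⁿ : u ∈ U(B), n ≥ 1}`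
of `R = A + X·B[X]`. -/
def Sset : Set (AXBX B A) :=
  {f | (∃ u : B, IsUnit u ∧ u ∈ A ∧ (f : Polynomial B) = Polynomial.C u) ∨
       (∃ u : B, IsUnit u ∧ ∃ n : ℕ, 1 ≤ n ∧
          (f : Polynomial B) = Polynomial.C u * Polynomial.X ^ n)}

/-- The saturated multiplicatively closed subset `S₀ = U(B) ∩ A` of `A`. -/
def S0set : Set A := {a : A | IsUnit (a : B)}

end AXBXdefs


/-- Any of the three kinds of `S'`-primitivity implies `S'`-primitivity. -/
lemma primOf_sprim {N : Type*} [AddCommGroup N] [Module R N] {S' : Set R}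
    (hS' : Saturated S') {kβ : Fin 3} {m : N} (h : PrimOf S' kβ m) : SPrimitive S' m := by
  fin_cases kβ
  · exact h
  · intro s hs n hn
    obtain ⟨u, hu, huS, hnu⟩ := h s hs n hn
    obtain ⟨v, rfl⟩ := hu
    refine ⟨⟨(v : R), huS, hnu⟩, ⟨((v⁻¹ : Rˣ) : R), ?_, ?_⟩⟩
    · exact (hS'.2.2 _ _ (by rw [Units.inv_mul]; exact hS'.1)).1
    · rw [hnu, smul_smul, Units.inv_mul, one_smul]
  · intro s hs n hn
    exact (h s hs n hn).1

/-- Any of the three kinds of irreducibility gives the `Assoc` splitting property. -/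
lemma irredOf_assoc {kα : Fin 3} {a : R} (h : IrredOf kα a) :
    ∀ b c : R, a = b * c → Assoc a b ∨ Assoc a c := by
  have strong : ∀ x y : R, StrongAssoc x y → Assoc x y := by
    intro x y hxy
    obtain ⟨u, hu, _, hab⟩ := hxy
    obtain ⟨v, rfl⟩ := hu
    exact ⟨⟨(v : R), Set.mem_univ _, hab⟩,
      ⟨((v⁻¹ : Rˣ) : R), Set.mem_univ _, by rw [hab, smul_smul, Units.inv_mul, one_smul]⟩⟩
  fin_cases kα
  · exact h.2
  · intro b c hbc
    rcases h.2 b c hbc with h' | h'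
    · exact Or.inl (strong _ _ h')
    · exact Or.inr (strong _ _ h')
  · intro b c hbc
    rcases h.2 b c hbc with h' | h'
    · exact Or.inl h'.1
    · exact Or.inr h'.1

theorem statement8 {R : Type*} [CommRing R] {M : Type*} [AddCommGroup M] [Module R M]
    [Nontrivial M] (S S' : Set R) (hS : Saturated S) (hS' : Saturated S') (hSS' : S ⊆ S')
    (kα kβ : Fin 3) (s' : R) (hs'1 : s' ∈ S') (hs'2 : s' ∉ S) (hs'3 : s' ∉ AnnSet R M)
    (m : M) (hm : m ≠ 0) (hα : IrredOf kα s') (hβ : PrimOf S' kβ m) :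
    (SemiSFactorable S (Set.univ : Set M) → SPrimitive S m) ∧
    (Splits S (Set.univ : Set M) → CompactlySAtomic S (S' \ AnnSet R M) →
      SPrimitive S s') := by
  constructor
  · -- part (i)
    intro hsemi
    have hβ' : SPrimitive S' m := primOf_sprim hS' hβ
    intro s hs n hmn
    have hn0 : n ≠ 0 := by rintro rfl; rw [smul_zero] at hmn; exact hm hmn
    obtain ⟨t, p, htS, hpprim, hn⟩ := hsemi.1 n (Set.mem_univ n) hn0
    have hm' : m = (s * t) • p := by rw [mul_smul, ← hn]; exact hmn
    have hst : s * t ∈ S := hS.2.1 s hs t htS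
    obtain ⟨⟨σ, hσS', hpσ⟩, -⟩ := hβ' (s * t) (hSS' hst) p hm'
    have hps : p = s • (σ • n) := by rw [smul_comm, ← hmn]; exact hpσ
    obtain ⟨⟨e₁, he₁S, he₁⟩, -⟩ := hpprim s hs (σ • n) hps
    have hp2 : p = (σ * (s * t)) • p := by rw [mul_smul, ← hm']; exact hpσ
    have he₁' : (σ * t) • p = e₁ • p := by rw [mul_smul, ← hn]; exact he₁
    have key : n = e₁ • m := by
      rw [hn, hm', smul_smul]
      calc t • p = t • ((σ * (s * t)) • p) := by rw [← hp2]
      _ = ((s * t) * (σ * t)) • p := by rw [smul_smul, show t * (σ * (s * t)) = (s * t) * (σ * t) from by ring]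
      _ = (s * t) • ((σ * t) • p) := by rw [smul_smul]
      _ = (s * t) • (e₁ • p) := by rw [he₁']
      _ = (e₁ * (s * t)) • p := by rw [smul_smul, show (s * t) * e₁ = e₁ * (s * t) from by ring]
    exact ⟨⟨e₁, he₁S, key⟩, ⟨s, hs, hmn⟩⟩
  · -- part (ii)
    intro _hsplit hcomp
    intro σ hσ x hx
    rw [smul_eq_mul] at hx
    have hs'0 : s' ≠ 0 := fun h => hs'3 (fun m' => by rw [h, zero_smul])
    have hx0 : x ≠ 0 := fun h => hs'0 (by rw [hx, h, mul_zero])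
    have hxS' : x ∈ S' := (hS'.2.2 σ x (by rw [← hx]; exact hs'1)).2
    have hxAnn : x ∉ AnnSet R M := fun h =>
      hs'3 (fun m' => by rw [hx, mul_smul, h m', smul_zero])
    obtain ⟨t₁, r₁, ht₁S, hr₁prim, hx1⟩ := hcomp x ⟨hxS', hxAnn⟩ hx0
    rw [smul_eq_mul] at hx1
    have hfac : s' = (σ * t₁) * r₁ := by rw [hx, hx1]; ring
    rcases irredOf_assoc hα (σ * t₁) r₁ hfac with h1 | h2
    · exfalso
      obtain ⟨-, ⟨d, -, hd⟩⟩ := h1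
      rw [smul_eq_mul] at hd
      have hmem : d * s' ∈ S := by rw [← hd]; exact hS.2.1 σ hσ t₁ ht₁S
      exact hs'2 (hS.2.2 d s' hmem).2
    · obtain ⟨-, ⟨b₁, -, hb₁⟩⟩ := h2
      rw [smul_eq_mul] at hb₁
      have hr : r₁ = σ • (b₁ * x) := by rw [smul_eq_mul, hb₁, hx]; ring
      obtain ⟨⟨e₁, he₁S, he₁⟩, -⟩ := hr₁prim σ hσ (b₁ * x) hr
      rw [smul_eq_mul] at he₁
      have key : x = e₁ * s' := by
        linear_combination (1 - e₁ * σ) * hx1 + t₁ * hb₁ + (t₁ * b₁ - e₁) * hx + σ * t₁ * he₁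
      exact ⟨⟨e₁, he₁S, by rw [smul_eq_mul]; exact key⟩, ⟨σ, hσ, by rw [smul_eq_mul]; exact hx⟩⟩


end FactorizationPaper
end

section
/- Let S ⊆ S' be saturated multiplicatively closed subsets of R. Suppose S is M-splitting and S' \ Ann(M) is compactly S-atomic (as a subset of the R-module R). Let α be one of: irreducible, strongly irreducible, very strongly irreducible, and β one of: primitive, strongly primitive, very strongly primitive. If M is (α, β)-S'-atomic, then M is (α, very strongly primitive)-S-atomic. -/
namespace FactorizationPaper

variable {R : Type*} [CommRing R]

/-!
Start from an `(α, β)`-`S'`-factorization `m = s₁ ⋯ s_k • n`. Since `S` splits `M`, the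
`S'`-primitive element `n` is already `S`-primitive, and each factor `sᵢ ∉ S` can be absorbed
into the primitive part: writing `sᵢ = t * r` compactly in `R`, irreducibility forces
`sᵢ ∼ r` (as `sᵢ ∼ t` would put `sᵢ` in `S`), and comparing two compact factorizations of
`r • w` shows that `t` is a unit. The factors lying in `S` remain, and a nonzero `S`-primitive
element of an `S`-split module is automatically very strongly `S`-primitive.
-/

theorem _root_.List.prod_filter_mul_prod_filter_not {α : Type*} [CommMonoid α] (p : α → Bool)
    (l : List α) : (l.filter p).prod * (l.filter (fun a => !p a)).prod = l.prod := by
  rw [← List.prod_append, (List.filter_append_perm p l).prod_eq]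

theorem saturated_univ : Saturated (Set.univ : Set R) :=
  ⟨trivial, fun _ _ _ _ => trivial, fun _ _ _ => ⟨trivial, trivial⟩⟩

theorem Saturated.mem_of_mul_eq_one {S : Set R} (hS : Saturated S) {u v : R} (h : v * u = 1) :
    v ∈ S :=
  (hS.2.2 v u (h ▸ hS.1)).1

section SplittingFactorizations

variable {M : Type*} [AddCommGroup M] [Module R M] {S S' : Set R}

theorem SAssoc.symm {x y : M} (h : SAssoc S x y) : SAssoc S y x := ⟨h.2, h.1⟩

theorem SAssoc.trans (hS : Saturated S) {x y z : M} (hxy : SAssoc S x y) (hyz : SAssoc S y z) :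
    SAssoc S x z := by
  obtain ⟨⟨a, ha, hxy⟩, ⟨b, hb, hyx⟩⟩ := hxy
  obtain ⟨⟨c, hc, hyz⟩, ⟨d, hd, hzy⟩⟩ := hyz
  exact ⟨⟨a * c, hS.2.1 a ha c hc, by rw [hxy, hyz, smul_smul]⟩,
    ⟨d * b, hS.2.1 d hd b hb, by rw [hzy, hyx, smul_smul]⟩⟩

theorem sAssoc_unit_smul (hS : Saturated S) {u : R} (hu : IsUnit u) (huS : u ∈ S) (x : M) :
    SAssoc S (u • x) x := by
  obtain ⟨v, hv⟩ := hu.exists_left_inv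
  exact ⟨⟨u, huS, rfl⟩, ⟨v, hS.mem_of_mul_eq_one hv, by rw [smul_smul, hv, one_smul]⟩⟩

theorem Assoc.of_strongAssoc {a b : R} (h : StrongAssoc a b) : Assoc a b := by
  obtain ⟨u, hu, -, rfl⟩ := h
  exact sAssoc_unit_smul saturated_univ hu trivial b

theorem IrredOf.irred {k : Fin 3} {a : R} (h : IrredOf k a) : Irred a := by
  fin_cases k
  · exact h
  · exact ⟨h.1, fun b c hbc => (h.2 b c hbc).imp Assoc.of_strongAssoc Assoc.of_strongAssoc⟩
  · exact ⟨h.1, fun b c hbc => (h.2 b c hbc).imp And.left And.left⟩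

theorem PrimOf.sPrimitive (hS : Saturated S) {k : Fin 3} {n : M} (h : PrimOf S k n) :
    SPrimitive S n := by
  fin_cases k
  · exact h
  · intro s hs x hx
    obtain ⟨u, hu, huS, rfl⟩ := h s hs x hx
    exact sAssoc_unit_smul hS hu huS n
  · exact fun s hs x hx => (h s hs x hx).1

theorem SPrimitive.unit_smul (hS : Saturated S) {u : R} (hu : IsUnit u) (huS : u ∈ S) {p : M}
    (hp : SPrimitive S p) : SPrimitive S (u • p) := by
  obtain ⟨v, hv⟩ := hu.exists_left_inv
  intro s hs x hx
  have hpx : p = (v * s) • x := by rw [mul_smul, ← hx, smul_smul, hv, one_smul]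
  exact (hp _ (hS.2.1 v (hS.mem_of_mul_eq_one hv) s hs) x hpx).trans hS
    (sAssoc_unit_smul hS hu huS p).symm

theorem SemiSFactorable.isUnit_of_eq_smul {E : Set M} (hE : SemiSFactorable S E) (h1 : 1 ∈ S)
    {m p : M} (hmE : m ∈ E) (hm : m ≠ 0) (hmp : SPrimitive S m) {u : R} (hu : u ∈ S)
    (hp : SPrimitive S p) (h : m = u • p) : IsUnit u := by
  obtain ⟨⟨c, -, hc⟩, -⟩ :=
    hE.2 m hmE hm 1 m u p ⟨h1, hmp, (one_smul R m).symm⟩ ⟨hu, hp, h⟩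
  exact IsUnit.of_mul_eq_one_right c hc.symm

theorem SPrimitive.sVeryStronglyPrimitive (hS : Saturated S)
    (hE : SemiSFactorable S (Set.univ : Set M)) {w : M} (hw : w ≠ 0) (hp : SPrimitive S w) :
    SVeryStronglyPrimitive S w := by
  intro s hs x hx
  refine ⟨hp s hs x hx, Or.inr fun t ht hxt => ?_⟩
  have hst : w = (s * t) • w := by rw [mul_smul, ← hxt, ← hx]
  exact isUnit_of_mul_isUnit_right
    (hE.isUnit_of_eq_smul hS.1 trivial hw hp (hS.2.1 s hs t ht) hp hst)

variable (hS : Saturated S) (hsplit : Splits S (Set.univ : Set M))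
  (hcompact : CompactlySAtomic S (S' \ AnnSet R M))
include hS hsplit hcompact

/-- Factoring `a = τ * ρ` compactly, `q = (τ * b) • (ρ • q)` and `q = 1 • q` are two
compact factorizations of `q`, so `τ * b` is a unit. -/
theorem Splits.isUnit_of_eq_mul_smul_self {q : M} (hq : q ≠ 0) (hqp : SPrimitive S q) {a b : R}
    (ha : a ∈ S') (hb : b ∈ S) (h : q = (a * b) • q) : IsUnit b := by
  have haM : a ∉ AnnSet R M := fun hann => hq (by rw [h, mul_smul, hann])
  have ha0 : a ≠ 0 := fun h0 => haM fun m => by rw [h0, zero_smul]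
  obtain ⟨τ, ρ, hτ, hρ, hτρ⟩ := hcompact a ⟨ha, haM⟩ ha0
  rw [smul_eq_mul] at hτρ
  subst hτρ
  have hq' : q = (τ * b) • (ρ • q) := by rw [smul_smul, mul_right_comm]; exact h
  have hρq0 : ρ • q ≠ 0 := fun h0 => hq (by rw [hq', h0, smul_zero])
  have hρq : SPrimitive S (ρ • q) := hsplit.2 ρ hρ q hqp hρq0 trivial
  exact isUnit_of_mul_isUnit_right
    (hsplit.1.isUnit_of_eq_smul hS.1 trivial hq hqp (hS.2.1 τ hτ b hb) hρq hq')

theorem Splits.sPrimitive_of_sPrimitive (hSS' : S ⊆ S') {n : M} (hn : n ≠ 0)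
    (hn' : SPrimitive S' n) : SPrimitive S n := by
  intro s hs x hx
  have hx0 : x ≠ 0 := fun h0 => hn (by rw [hx, h0, smul_zero])
  obtain ⟨t, p, ht, hp, rfl⟩ := hsplit.1.1 x trivial hx0
  have hp0 : p ≠ 0 := fun h0 => hx0 (by rw [h0, smul_zero])
  have hst : s * t ∈ S := hS.2.1 s hs t ht
  have hnp : n = (s * t) • p := by rw [hx, smul_smul]
  obtain ⟨⟨a, ha, hpa⟩, -⟩ := hn' (s * t) (hSS' hst) p hnp
  have hunit : IsUnit (s * t) :=
    hsplit.isUnit_of_eq_mul_smul_self hS hcompact hp0 hp ha hst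
      (by rw [mul_smul, ← hnp]; exact hpa)
  rw [hx]
  exact (sAssoc_unit_smul hS (isUnit_of_mul_isUnit_left hunit) hs _).symm

theorem Splits.sPrimitive_smul_of_irred (hS' : Saturated S') {s : R} (hs' : s ∈ S') (hs : s ∉ S)
    (hirr : Irred s) {w : M} (hw : SPrimitive S w) (hsw : s • w ≠ 0) :
    SPrimitive S (s • w) := by
  have hs0 : s ≠ 0 := fun h0 => hsw (by rw [h0, zero_smul])
  obtain ⟨t, r, ht, hr, hstr⟩ := hcompact s ⟨hs', fun hann => hsw (hann w)⟩ hs0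
  rw [smul_eq_mul] at hstr
  rcases hirr.2 t r hstr with ⟨-, c, -, htc⟩ | ⟨-, c, -, hrc⟩
  · rw [smul_eq_mul] at htc
    exact absurd (hS.2.2 c s (htc ▸ ht)).2 hs
  rw [smul_eq_mul] at hrc
  rw [hstr, mul_smul] at hsw ⊢
  have hrw0 : r • w ≠ 0 := fun h0 => hsw (by rw [h0, smul_zero])
  have hrw : SPrimitive S (r • w) := hsplit.2 r hr w hw hrw0 trivial
  have hrS' : r ∈ S' := (hS'.2.2 t r (hstr ▸ hs')).2
  have hcS' : c ∈ S' := (hS'.2.2 c s (hrc ▸ hrS')).1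
  have ht_unit : IsUnit t := hsplit.isUnit_of_eq_mul_smul_self hS hcompact hrw0 hrw hcS' ht
    (by conv_lhs => rw [hrc, hstr]
        rw [smul_smul, mul_assoc])
  exact hrw.unit_smul hS ht_unit ht

theorem Splits.sPrimitive_list_prod_smul (hS' : Saturated S') {l : List R}
    (hl : ∀ s ∈ l, s ∈ S' ∧ s ∉ S ∧ Irred s) {n : M} (hn : SPrimitive S n)
    (hln : l.prod • n ≠ 0) : SPrimitive S (l.prod • n) := by
  induction l with
  | nil => simpa using hn
  | cons s l ih =>
    rw [List.prod_cons, mul_smul] at hln ⊢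
    obtain ⟨hs', hs, hirr⟩ := hl s List.mem_cons_self
    exact hsplit.sPrimitive_smul_of_irred hS hcompact hS' hs' hs hirr
      (ih (fun x hx => hl x (List.mem_cons_of_mem s hx)) fun h0 => hln (by rw [h0, smul_zero]))
      hln

end SplittingFactorizations

theorem statement9_general {R : Type*} [CommRing R] {M : Type*} [AddCommGroup M] [Module R M]
    (S S' : Set R) (hS : Saturated S) (hS' : Saturated S') (hSS' : S ⊆ S')
    (hsplit : Splits S (Set.univ : Set M))
    (hcompact : CompactlySAtomic S (S' \ AnnSet R M)) (kα kβ : Fin 3)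
    (hatomic : ABAtomicModule S' M kα kβ) :
    ABAtomicModule S M kα (2 : Fin 3) := by
  intro m hm
  obtain ⟨l, n, ⟨hl, rfl⟩, hα, hβ⟩ := hatomic m hm
  have hn0 : n ≠ 0 := fun h0 => hm (by rw [h0, smul_zero])
  have hn : SPrimitive S n :=
    hsplit.sPrimitive_of_sPrimitive hS hcompact hSS' hn0 (hβ.sPrimitive hS')
  classical
  set w := (l.filter fun s => !decide (s ∈ S)).prod • n
  have hlw : l.prod • n = (l.filter fun s => decide (s ∈ S)).prod • w := by
    rw [smul_smul, List.prod_filter_mul_prod_filter_not]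
  have hw0 : w ≠ 0 := fun h0 => hm (by rw [hlw, h0, smul_zero])
  have hw : SPrimitive S w := hsplit.sPrimitive_list_prod_smul hS hcompact hS'
    (fun s hs => by
      obtain ⟨hsl, hsS⟩ := List.mem_filter.1 hs
      exact ⟨(hl s hsl).1, by simpa using hsS, (hα s hsl).irred⟩) hn hw0
  refine ⟨_, w, ⟨fun s hs => ?_, hlw⟩, fun s hs => hα s (List.mem_of_mem_filter hs),
    hw.sVeryStronglyPrimitive hS hsplit.1 hw0⟩
  obtain ⟨hsl, hsS⟩ := List.mem_filter.1 hs
  exact ⟨by simpa using hsS, (hl s hsl).2⟩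

theorem statement9 {R : Type*} [CommRing R] {M : Type*} [AddCommGroup M] [Module R M]
    [Nontrivial M] (S S' : Set R) (hS : Saturated S) (hS' : Saturated S') (hSS' : S ⊆ S')
    (hsplit : Splits S (Set.univ : Set M))
    (hcompact : CompactlySAtomic S (S' \ AnnSet R M)) (kα kβ : Fin 3)
    (hatomic : ABAtomicModule S' M kα kβ) :
    ABAtomicModule S M kα (2 : Fin 3) :=
  statement9_general S S' hS hS' hSS' hsplit hcompact kα kβ hatomic

end FactorizationPaper
end

section
/- Let S ⊆ S' be saturated multiplicatively closed subsets of R and T = S^{-1}S'. Suppose S is M-splitting, S' \ Ann(M) is compactly S-atomic (as a subset of the R-module R), and S ∩ Z(M) = S ∩ Z(R) = ∅. Let α be one of: irreducible, strongly irreducible, very strongly irreducible, and β one of: primitive, strongly primitive, very strongly primitive. Then M is (α, β)-S'-atomic if and only if M is (α, primitive)-S-atomic and the localized R_S-module M_S is (α, β)-T-atomic. -/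
namespace FactorizationPaper

variable {R : Type*} [CommRing R]

/-!
Since `S` consists of non-zero-divisors of `R` and `M`, the maps `R → R_S` and `M → M_S` are
injective, and the units of `R_S` are the fractions `s / t` with `s ∈ S`. Splitting makes compact
`S`-atomic factorizations `m = s • n` in `M` unique up to a unit of `R`; multiplying by a suitable
`S`-primitive element of `M` carries this uniqueness over to `S' \ Ann(M)`, whose elements are
`t * q` with `t ∈ S` and `q` an `S`-primitive element of `S' \ Ann(M)`. Consequently an
irreducible element of `S' \ (S ∪ Ann(M))` is itself `S`-primitive; for `S`-primitive elements of
`S' \ Ann(M)`, divisibility and each kind of irreducibility are the same in `R` and in `R_S`; and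
for an `S`-primitive `n ∈ M`, each kind of `S'`-primitivity of `n` is the same as the
corresponding kind of `T`-primitivity of `n / 1`.

An `(α, β)`-`S'`-factorization of `m` therefore splits into its factors from `S`, which give an
`(α, primitive)`-`S`-factorization, and its `S`-primitive factors, whose images in `R_S` give a
`T`-factorization of `m / 1`. Conversely, a `T`-factorization of `n / 1`, for `n` the primitive
part of an `(α, primitive)`-`S`-factorization of `m`, is pulled back to `R` and `M` and appended
to it.
-/

section Generic

theorem Saturated.mul_mem {S : Set R} (hS : Saturated S) {a b : R} (ha : a ∈ S) (hb : b ∈ S) :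
    a * b ∈ S :=
  hS.2.1 a ha b hb

theorem Saturated.mem_of_dvd {S : Set R} (hS : Saturated S) {a b : R} (h : a ∣ b) (hb : b ∈ S) :
    a ∈ S := by
  obtain ⟨c, rfl⟩ := h
  exact (hS.2.2 a c hb).1

theorem Saturated.mem_of_isUnit {S : Set R} (hS : Saturated S) {u : R} (hu : IsUnit u) : u ∈ S :=
  hS.mem_of_dvd hu.dvd hS.1

variable {N : Type*} [AddCommGroup N] [Module R N]

theorem PrimOf.isUnit_smul {S : Set R} (hmul : ∀ x ∈ S, ∀ y ∈ S, x * y ∈ S)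
    (hunit : ∀ u : R, IsUnit u → u ∈ S) {k : Fin 3} {u : R} (hu : IsUnit u) {m : N}
    (hm : PrimOf S k m) : PrimOf S k (u • m) := by
  obtain ⟨u, rfl⟩ := hu
  have hu' : (u : R) ∈ S := hunit _ u.isUnit
  have hinv : ((u⁻¹ : Rˣ) : R) ∈ S := hunit _ u⁻¹.isUnit
  have hcancel : ∀ (s : R) (n : N), (u : R) • m = s • n → m = ((u⁻¹ : Rˣ) * s : R) • n :=
    fun s n h => by rw [mul_smul, ← h, smul_smul, Units.inv_mul, one_smul]
  fin_cases k
  · intro s hs n h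
    obtain ⟨⟨σ, hσ, h₁⟩, ⟨τ, hτ, h₂⟩⟩ := hm _ (hmul _ hinv _ hs) n (hcancel s n h)
    exact ⟨⟨σ * ↑u⁻¹, hmul _ hσ _ hinv, by rw [h₁, smul_smul, mul_assoc, Units.inv_mul, mul_one]⟩,
      ⟨u * τ, hmul _ hu' _ hτ, by rw [mul_smul, ← h₂]⟩⟩
  · intro s hs n h
    obtain ⟨w, hw, -, h₁⟩ := hm _ (hmul _ hinv _ hs) n (hcancel s n h)
    exact ⟨w * ↑u⁻¹, hw.mul u⁻¹.isUnit, hunit _ (hw.mul u⁻¹.isUnit),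
      by rw [h₁, smul_smul, mul_assoc, Units.inv_mul, mul_one]⟩
  · intro s hs n h
    obtain ⟨⟨⟨σ, hσ, h₁⟩, ⟨τ, hτ, h₂⟩⟩, h₃⟩ := hm _ (hmul _ hinv _ hs) n (hcancel s n h)
    refine ⟨⟨⟨σ * ↑u⁻¹, hmul _ hσ _ hinv, by rw [h₁, smul_smul, mul_assoc, Units.inv_mul, mul_one]⟩,
      ⟨u * τ, hmul _ hu' _ hτ, by rw [mul_smul, ← h₂]⟩⟩, ?_⟩
    rcases h₃ with ⟨hn, hm0⟩ | h₃
    · exact Or.inl ⟨hn, by rw [hm0, smul_zero]⟩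
    · exact Or.inr fun σ hσ hn =>
        isUnit_of_mul_isUnit_left (h₃ (σ * u) (hmul _ hσ _ hu') (by rw [hn, mul_smul]))

/-- The relations `∼`, `≈`, `≅` behind `IrredOf 0`, `IrredOf 1`, `IrredOf 2`, restated with `∣`
and `Associated`. -/
def AssocOf : Fin 3 → R → R → Prop
  | 0, a, b => a ∣ b ∧ b ∣ a
  | 1, a, b => Associated a b
  | 2, a, b => (a ∣ b ∧ b ∣ a) ∧ (a = 0 ∧ b = 0 ∨ ∀ s, a = s * b → IsUnit s)

theorem sAssoc_univ_iff {a b : R} : SAssoc (Set.univ : Set R) a b ↔ a ∣ b ∧ b ∣ a := by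
  simp only [SAssoc, Set.mem_univ, true_and, smul_eq_mul, dvd_iff_exists_eq_mul_left]
  exact And.comm

theorem strongAssoc_iff {a b : R} : StrongAssoc a b ↔ Associated a b := by
  simp only [StrongAssoc, SStrongAssoc, Set.mem_univ, true_and, smul_eq_mul]
  constructor
  · rintro ⟨u, hu, rfl⟩
    exact (associated_isUnit_mul_left_iff hu).2 (Associated.refl b)
  · rintro ⟨u, rfl⟩
    exact ⟨↑u⁻¹, u⁻¹.isUnit, by rw [mul_comm, Units.mul_inv_cancel_right]⟩

theorem irredOf_iff {k : Fin 3} {a : R} :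
    IrredOf k a ↔ ¬ IsUnit a ∧ ∀ b c, a = b * c → AssocOf k a b ∨ AssocOf k a c := by
  fin_cases k <;>
    simp only [IrredOf, Irred, StrongIrred, VeryStrongIrred, VeryStrongAssoc, SVeryStrongAssoc,
      AssocOf, Assoc, sAssoc_univ_iff, strongAssoc_iff, Set.mem_univ, true_implies, smul_eq_mul]

theorem AssocOf.dvd_and_dvd {k : Fin 3} {a b : R} (h : AssocOf k a b) : a ∣ b ∧ b ∣ a := by
  fin_cases k
  exacts [h, ⟨Associated.dvd h, Associated.dvd' h⟩, h.1]

theorem AssocOf.isUnit_mul_left {k : Fin 3} {a b u : R} (hu : IsUnit u) (h : AssocOf k a b) :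
    AssocOf k (u * a) b := by
  obtain ⟨u, rfl⟩ := hu
  have hdvd : ∀ {a b : R}, a ∣ b ∧ b ∣ a → ↑u * a ∣ b ∧ b ∣ ↑u * a := fun h =>
    ⟨(Units.mul_left_dvd).2 h.1, Dvd.dvd.mul_left h.2 _⟩
  fin_cases k
  · exact hdvd h
  · exact (associated_unit_mul_left_iff).2 h
  · refine ⟨hdvd h.1, h.2.imp (fun h0 => ⟨by rw [h0.1, mul_zero], h0.2⟩) fun hs s hus => ?_⟩
    simpa using hs (↑u⁻¹ * s) (by rw [mul_assoc, ← hus, Units.inv_mul_cancel_left])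

theorem AssocOf.isUnit_mul_right {k : Fin 3} {a b u : R} (hu : IsUnit u) (h : AssocOf k a b) :
    AssocOf k a (u * b) := by
  obtain ⟨u, rfl⟩ := hu
  have hdvd : ∀ {a b : R}, a ∣ b ∧ b ∣ a → a ∣ ↑u * b ∧ ↑u * b ∣ a := fun h =>
    ⟨Dvd.dvd.mul_left h.1 _, (Units.mul_left_dvd).2 h.2⟩
  fin_cases k
  · exact hdvd h
  · exact (associated_unit_mul_right_iff).2 h
  · refine ⟨hdvd h.1, h.2.imp (fun h0 => ⟨h0.1, by rw [h0.2, mul_zero]⟩) fun hs s hsu => ?_⟩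
    exact isUnit_of_mul_isUnit_left (hs (s * u) (by rw [hsu, mul_assoc]))

theorem IrredOf.isUnit_mul {k : Fin 3} {a u : R} (hu : IsUnit u) (h : IrredOf k a) :
    IrredOf k (u * a) := by
  rw [irredOf_iff] at h ⊢
  refine ⟨fun h' => h.1 (isUnit_of_mul_isUnit_right h'), fun b c hbc => ?_⟩
  have hinv : b = u * (↑hu.unit⁻¹ * b) := by rw [← mul_assoc, hu.mul_val_inv, one_mul]
  have ha : a = (↑hu.unit⁻¹ * b) * c := by
    rw [mul_assoc, ← hbc, ← mul_assoc, hu.val_inv_mul, one_mul]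
  refine (h.2 _ c ha).imp (fun h' => ?_) (fun h' => h'.isUnit_mul_left hu)
  rw [hinv]
  exact (h'.isUnit_mul_left hu).isUnit_mul_right hu

end Generic

section Regular

variable {N : Type*} [AddCommGroup N] [Module R N] {S : Set R}

theorem eq_of_smul_eq_smul (hZ : S ∩ ZDiv R N = ∅) {s : R} (hs : s ∈ S) {m n : N}
    (h : s • m = s • n) : m = n := by
  by_contra hne
  exact Set.notMem_empty s (hZ ▸ ⟨hs, m - n, sub_ne_zero.2 hne, by rw [smul_sub, h, sub_self]⟩)

theorem smul_ne_zero_of_mem (hZ : S ∩ ZDiv R N = ∅) {s : R} (hs : s ∈ S) {m : N} (hm : m ≠ 0) :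
    s • m ≠ 0 :=
  fun h => hm (eq_of_smul_eq_smul hZ hs (by rw [h, smul_zero]))

theorem mem_annSet_of_dvd {a b : R} (h : a ∣ b) (ha : a ∈ AnnSet R N) : b ∈ AnnSet R N :=
  (AnnIdeal R N).mem_of_dvd h ha

theorem mul_notMem_annSet (hZ : S ∩ ZDiv R N = ∅) {s a : R} (hs : s ∈ S) (ha : a ∉ AnnSet R N) :
    s * a ∉ AnnSet R N :=
  fun h => ha fun m => eq_of_smul_eq_smul hZ hs (by rw [smul_zero, ← mul_smul]; exact h m)

end Regular

section Localization

variable {N : Type*} [AddCommGroup N] [Module R N]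

theorem Localization.exists_eq_mk {S : Submonoid R} (X : Localization S) :
    ∃ a t, X = Localization.mk a t :=
  Localization.induction_on X fun p => ⟨p.1, p.2, rfl⟩

theorem LocalizedModule.exists_eq_mk {S : Submonoid R} (X : LocalizedModule S N) :
    ∃ m t, X = LocalizedModule.mk m t :=
  LocalizedModule.induction_on (fun m t => ⟨m, t, rfl⟩) X

theorem LocalizedModule.mk_smul_one {S : Submonoid R} (r : R) (m : N) :
    LocalizedModule.mk (r • m) (1 : S) =
      (Localization.mk r 1 : Localization S) • LocalizedModule.mk m 1 := by
  rw [LocalizedModule.mk_smul_mk, mul_one]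

theorem Localization.list_prod_map_mk {S : Submonoid R} (l : List R) :
    (l.map fun a => Localization.mk a (1 : S)).prod = Localization.mk l.prod 1 := by
  simp only [Localization.mk_one_eq_algebraMap]
  exact (map_list_prod _ _).symm

namespace Saturated

variable {S : Set R} (hS : Saturated S)

theorem mk_eq_mk_iff (hZ : S ∩ ZDiv R R = ∅) {a b : R} {s t : hS.submonoid} :
    Localization.mk a s = Localization.mk b t ↔ ↑t * a = ↑s * b := by
  rw [Localization.mk_eq_mk_iff, Localization.r_iff_exists]
  exact ⟨fun ⟨c, hc⟩ => eq_of_smul_eq_smul hZ c.2 hc, fun h => ⟨1, by rw [h]⟩⟩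

theorem localizedModule_mk_eq_mk_iff (hZ : S ∩ ZDiv R N = ∅) {m n : N} {s t : hS.submonoid} :
    LocalizedModule.mk m s = LocalizedModule.mk n t ↔ (t : R) • m = (s : R) • n := by
  simp only [LocalizedModule.mk_eq, Submonoid.smul_def]
  exact ⟨fun ⟨c, hc⟩ => eq_of_smul_eq_smul hZ c.2 hc, fun h => ⟨1, by rw [h]⟩⟩

theorem isUnit_mk_iff {a : R} {t : hS.submonoid} : IsUnit (Localization.mk a t) ↔ a ∈ S := by
  constructor
  · rintro ⟨u, hu⟩
    obtain ⟨b, d, hbd⟩ := Localization.exists_eq_mk (↑u⁻¹ : Localization hS.submonoid)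
    have h : Localization.mk (a * b) (t * d) = 1 := by
      rw [← Localization.mk_mul, ← hu, ← hbd, Units.mul_inv]
    rw [← Localization.mk_one, Localization.mk_eq_mk_iff, Localization.r_iff_exists] at h
    obtain ⟨c, hc⟩ := h
    refine hS.mem_of_dvd ⟨c * b, ?_⟩ (hS.mul_mem c.2 (hS.mul_mem t.2 d.2))
    simp only [Submonoid.coe_mul, OneMemClass.coe_one, one_mul, mul_one] at hc
    rw [← hc]
    ring
  · intro ha
    refine IsUnit.of_mul_eq_one (Localization.mk (t : R) ⟨a, ha⟩) ?_
    rw [Localization.mk_mul, mul_comm a]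
    exact Localization.mk_self (t * ⟨a, ha⟩)

theorem mul_mem_locT {S' : Set R} (hS' : Saturated S') {X Y : Localization hS.submonoid}
    (hX : X ∈ locT hS S') (hY : Y ∈ locT hS S') : X * Y ∈ locT hS S' := by
  obtain ⟨a, ha, s, rfl⟩ := hX
  obtain ⟨b, hb, t, rfl⟩ := hY
  exact ⟨a * b, hS'.mul_mem ha hb, s * t, Localization.mk_mul a b s t⟩

theorem mem_locT_of_isUnit {S' : Set R} (hSS' : S ⊆ S') {X : Localization hS.submonoid}
    (hX : IsUnit X) : X ∈ locT hS S' := by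
  obtain ⟨a, t, rfl⟩ := Localization.exists_eq_mk X
  exact ⟨a, hSS' (hS.isUnit_mk_iff.1 hX), t, rfl⟩

end Saturated

end Localization

def PrimPart (S S' : Set R) (M : Type*) [AddCommGroup M] [Module R M] : Set R :=
  {p | SPrimitive S p ∧ p ∈ S' ∧ p ∉ AnnSet R M}

structure SplitSetting {S : Set R} (hS : Saturated S) (S' : Set R) (M : Type*) [AddCommGroup M]
    [Module R M] : Prop where
  saturated' : Saturated S'
  subset : S ⊆ S'
  splits : Splits S (Set.univ : Set M)
  compactlySAtomic : CompactlySAtomic S (S' \ AnnSet R M)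
  inter_zDiv : S ∩ ZDiv R M = ∅
  inter_zDiv_self : S ∩ ZDiv R R = ∅

namespace SplitSetting

variable {M : Type*} [AddCommGroup M] [Module R M] {S S' : Set R} {hS : Saturated S}
  (H : SplitSetting hS S' M)
include H

theorem exists_smul_sPrimitive {m : M} (hm : m ≠ 0) : ∃ s ∈ S, ∃ n, SPrimitive S n ∧ m = s • n := by
  obtain ⟨s, n, hs, hn, h⟩ := H.splits.1.1 m trivial hm
  exact ⟨s, hs, n, hn, h⟩

theorem sPrimitive_smul {r : R} {m : M} (hr : SPrimitive S r) (hm : SPrimitive S m)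
    (h : r • m ≠ 0) : SPrimitive S (r • m) :=
  H.splits.2 r hr m hm h trivial

/-- Semi-`S`-factorability of `M`, sharpened by the regularity of `S`. -/
theorem exists_isUnit_of_smul_eq_smul {A B : R} {n n' : M} (hA : A ∈ S) (hB : B ∈ S)
    (hn : SPrimitive S n) (hn' : SPrimitive S n') (h0 : A • n ≠ 0) (h : A • n = B • n') :
    ∃ u, IsUnit u ∧ B = u * A ∧ n = u • n' := by
  obtain ⟨⟨c, hc⟩, ⟨d, hd⟩⟩ := sAssoc_univ_iff.1
    (H.splits.1.2 _ trivial h0 A n B n' ⟨hA, hn, rfl⟩ ⟨hB, hn', h⟩)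
  have hcd : c * d = 1 := eq_of_smul_eq_smul H.inter_zDiv_self hA (by
    change A * (c * d) = A * 1
    rw [mul_one, ← mul_assoc, ← hc, ← hd])
  refine ⟨c, .of_mul_eq_one d hcd, by rw [hc, mul_comm], eq_of_smul_eq_smul H.inter_zDiv hA ?_⟩
  rw [h, hc, mul_smul]

theorem isUnit_of_eq_smul {P W : M} {s : R} (hP : SPrimitive S P) (hP0 : P ≠ 0) (hs : s ∈ S)
    (h : P = s • W) : IsUnit s := by
  obtain ⟨⟨σ, hσ, hW⟩, -⟩ := hP s hs W h
  obtain ⟨u, hu, hsu, -⟩ := H.exists_isUnit_of_smul_eq_smul hS.1 (hS.mul_mem hs hσ) hP hP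
    (by rwa [one_smul]) (by rw [one_smul, mul_smul, ← hW, ← h])
  rw [mul_one] at hsu
  exact isUnit_of_mul_isUnit_left (hsu ▸ hu)

theorem sPrimitive_of_eq_smul {v n : M} {r : R} (hv : SPrimitive S v) (hv0 : v ≠ 0)
    (h : v = r • n) : SPrimitive S n := by
  have hn0 : n ≠ 0 := by rintro rfl; exact hv0 (by rw [h, smul_zero])
  obtain ⟨e, he, w, hw, rfl⟩ := H.exists_smul_sPrimitive hn0
  have he' : IsUnit e := H.isUnit_of_eq_smul hv hv0 he (by rw [h, smul_comm])
  exact PrimOf.isUnit_smul (k := 0) hS.2.1 (fun _ => hS.mem_of_isUnit) he' hw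

theorem sPrimitive_of_primOf {k : Fin 3} {n : M} (hn0 : n ≠ 0) (hn : PrimOf S' k n) :
    SPrimitive S n := by
  obtain ⟨e, he, w, hw, hnw⟩ := H.exists_smul_sPrimitive hn0
  obtain ⟨σ, -, hwσ⟩ : ∃ σ ∈ S', w = σ • n := by
    fin_cases k
    · exact (hn e (H.subset he) w hnw).1
    · obtain ⟨U, -, hU, h⟩ := hn e (H.subset he) w hnw
      exact ⟨U, hU, h⟩
    · exact (hn e (H.subset he) w hnw).1.1
  exact H.sPrimitive_of_eq_smul hw (by rintro rfl; exact hn0 (by rw [hnw, smul_zero])) hwσ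

theorem sPrimitive_list_prod_smul {l : List R} (hl : ∀ r ∈ l, SPrimitive S r) {m : M}
    (hm : SPrimitive S m) (h0 : l.prod • m ≠ 0) : SPrimitive S (l.prod • m) := by
  induction l with
  | nil => simpa using hm
  | cons r l ih =>
    rw [List.prod_cons, mul_smul] at h0 ⊢
    rw [List.forall_mem_cons] at hl
    exact H.sPrimitive_smul hl.1 (ih hl.2 fun h => h0 (by rw [h, smul_zero])) h0

theorem exists_sPrimitive_smul_ne_zero {r : R} (hr : r ∉ AnnSet R M) :
    ∃ y : M, SPrimitive S y ∧ r • y ≠ 0 := by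
  obtain ⟨m, hm⟩ : ∃ m : M, r • m ≠ 0 := by simpa [AnnSet] using hr
  have hm0 : m ≠ 0 := by rintro rfl; exact hm (smul_zero r)
  obtain ⟨e, -, y, hy, rfl⟩ := H.exists_smul_sPrimitive hm0
  exact ⟨y, hy, fun h => hm (by rw [smul_comm, h, smul_zero])⟩

theorem exists_mul_mem_primPart {a : R} (ha : a ∈ S') (hann : a ∉ AnnSet R M) :
    ∃ t ∈ S, ∃ q ∈ PrimPart S S' M, a = t * q := by
  have ha0 : a ≠ 0 := by rintro rfl; exact hann fun m => zero_smul R m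
  obtain ⟨t, q, ht, hq, rfl⟩ := H.compactlySAtomic a ⟨ha, hann⟩ ha0
  exact ⟨t, ht, q, ⟨hq, H.saturated'.mem_of_dvd (dvd_mul_left q t) ha,
    fun h => hann (mem_annSet_of_dvd (dvd_mul_left q t) h)⟩, rfl⟩

theorem isUnit_of_eq_mul {p q t : R} (hp : SPrimitive S p) (hpann : p ∉ AnnSet R M) (ht : t ∈ S)
    (h : p = t * q) : IsUnit t := by
  obtain ⟨y, hy, hpy⟩ := H.exists_sPrimitive_smul_ne_zero hpann
  exact H.isUnit_of_eq_smul (H.sPrimitive_smul hp hy hpy) hpy ht (W := q • y) (by rw [h, mul_smul])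

theorem mem_primPart_of_dvd {p b : R} (hp : p ∈ PrimPart S S' M) (h : b ∣ p) :
    b ∈ PrimPart S S' M := by
  obtain ⟨hp, hpS', hpann⟩ := hp
  have hbS' : b ∈ S' := H.saturated'.mem_of_dvd h hpS'
  have hbann : b ∉ AnnSet R M := fun hb => hpann (mem_annSet_of_dvd h hb)
  obtain ⟨c, rfl⟩ := h
  obtain ⟨t, ht, q, hq, rfl⟩ := H.exists_mul_mem_primPart hbS' hbann
  have htu : IsUnit t := H.isUnit_of_eq_mul hp hpann ht (q := q * c) (mul_assoc t q c)
  exact ⟨PrimOf.isUnit_smul (k := 0) hS.2.1 (fun _ => hS.mem_of_isUnit) htu hq.1, hbS', hbann⟩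

theorem mem_primPart_of_irredOf {k : Fin 3} {a : R} (ha : a ∈ S') (haS : a ∉ S)
    (hann : a ∉ AnnSet R M) (hirr : IrredOf k a) : a ∈ PrimPart S S' M := by
  obtain ⟨t, ht, q, hq, rfl⟩ := H.exists_mul_mem_primPart ha hann
  rcases (irredOf_iff.1 hirr).2 t q rfl with h | h
  · exact absurd (hS.mem_of_dvd h.dvd_and_dvd.1 ht) haS
  · obtain ⟨E, hE⟩ := h.dvd_and_dvd.1
    have htu : IsUnit t :=
      H.isUnit_of_eq_mul hq.1 hq.2.2 ht (q := q * E) (hE.trans (mul_assoc _ _ _))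
    exact ⟨PrimOf.isUnit_smul (k := 0) hS.2.1 (fun _ => hS.mem_of_isUnit) htu hq.1, ha, hann⟩

theorem exists_eq_mul_of_smul_eq_smul {A G : R} {n v : M} (hA : A ∈ S) (hG : G ∈ S')
    (hn : SPrimitive S n) (hv : SPrimitive S v) (hn0 : n ≠ 0) (h : A • n = G • v) :
    ∃ g ∈ S', G = A * g ∧ n = g • v := by
  have h0 : A • n ≠ 0 := smul_ne_zero_of_mem H.inter_zDiv hA hn0
  have hGann : G ∉ AnnSet R M := fun hG' => h0 (by rw [h, hG' v])
  obtain ⟨t, ht, q, ⟨hq, hqS', -⟩, rfl⟩ := H.exists_mul_mem_primPart hG hGann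
  rw [mul_smul] at h
  have hqv0 : q • v ≠ 0 := fun h' => h0 (by rw [h, h', smul_zero])
  obtain ⟨u, hu, rfl, hnu⟩ :=
    H.exists_isUnit_of_smul_eq_smul hA ht hn (H.sPrimitive_smul hq hv hqv0) h0 h
  exact ⟨u * q, H.saturated'.mul_mem (H.saturated'.mem_of_isUnit hu) hqS', by ring,
    by rw [hnu, mul_smul]⟩

theorem exists_eq_mul_of_mul_eq_mul {A G p q : R} (hA : A ∈ S) (hp : p ∈ PrimPart S S' M)
    (hq : SPrimitive S q) (h : A * p = G * q) : ∃ g, G = A * g ∧ p = g * q := by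
  obtain ⟨hp, hpS', hpann⟩ := hp
  have hG : G ∈ S' :=
    H.saturated'.mem_of_dvd (Dvd.intro q h.symm) (H.saturated'.mul_mem (H.subset hA) hpS')
  obtain ⟨y, hy, hApy⟩ :=
    H.exists_sPrimitive_smul_ne_zero (mul_notMem_annSet H.inter_zDiv hA hpann)
  rw [mul_smul] at hApy
  have hpy0 : p • y ≠ 0 := fun h' => hApy (by rw [h', smul_zero])
  have hqy0 : q • y ≠ 0 := fun h' => hApy (by rw [← mul_smul, h, mul_smul, h', smul_zero])
  obtain ⟨g, -, rfl, -⟩ := H.exists_eq_mul_of_smul_eq_smul hA hG (H.sPrimitive_smul hp hy hpy0)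
    (H.sPrimitive_smul hq hy hqy0) hpy0 (by rw [← mul_smul, h, mul_smul])
  exact ⟨g, rfl, eq_of_smul_eq_smul H.inter_zDiv_self hA (by
    change A * p = A * (g * q)
    rw [h, mul_assoc])⟩

end SplitSetting

namespace SplitSetting

variable {M : Type*} [AddCommGroup M] [Module R M] {S S' : Set R} {hS : Saturated S}
  (H : SplitSetting hS S' M)
include H

theorem mk_ne_zero {n : M} (hn0 : n ≠ 0) : LocalizedModule.mk n (1 : hS.submonoid) ≠ 0 := by
  rw [← LocalizedModule.zero_mk 1, Ne, hS.localizedModule_mk_eq_mk_iff H.inter_zDiv]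
  simpa using hn0

theorem exists_isUnit_smul_mk {X : LocalizedModule hS.submonoid M} (hX : X ≠ 0) :
    ∃ W : Localization hS.submonoid, IsUnit W ∧ ∃ v : M, SPrimitive S v ∧ v ≠ 0 ∧
      X = W • LocalizedModule.mk v (1 : hS.submonoid) := by
  obtain ⟨m, t, rfl⟩ := LocalizedModule.exists_eq_mk X
  have hm0 : m ≠ 0 := by rintro rfl; exact hX (LocalizedModule.zero_mk t)
  obtain ⟨e, he, v, hv, rfl⟩ := H.exists_smul_sPrimitive hm0
  exact ⟨Localization.mk e t, hS.isUnit_mk_iff.2 he, v, hv,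
    by rintro rfl; exact hm0 (smul_zero e), by rw [LocalizedModule.mk_smul_mk, mul_one]⟩

theorem exists_eq_mk_of_mk_eq_smul {n v : M} {Θ : Localization hS.submonoid}
    (hn : SPrimitive S n) (hn0 : n ≠ 0) (hv : SPrimitive S v) (hΘ : Θ ∈ locT hS S')
    (h : LocalizedModule.mk n (1 : hS.submonoid) = Θ • LocalizedModule.mk v (1 : hS.submonoid)) :
    ∃ g ∈ S', Θ = Localization.mk g 1 ∧ n = g • v := by
  obtain ⟨g', hg', δ, rfl⟩ := hΘ
  rw [LocalizedModule.mk_smul_mk, mul_one, hS.localizedModule_mk_eq_mk_iff H.inter_zDiv] at h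
  simp only [OneMemClass.coe_one, one_smul] at h
  obtain ⟨g, hg, rfl, rfl⟩ := H.exists_eq_mul_of_smul_eq_smul δ.2 hg' hn hv hn0 h
  exact ⟨g, hg, (hS.mk_eq_mk_iff H.inter_zDiv_self).2 (by simp), rfl⟩

theorem exists_isUnit_of_mk_eq_smul {n v : M} {U : Localization hS.submonoid}
    (hn : SPrimitive S n) (hn0 : n ≠ 0) (hv : SPrimitive S v) (hU : IsUnit U)
    (h : LocalizedModule.mk n (1 : hS.submonoid) = U • LocalizedModule.mk v (1 : hS.submonoid)) :
    ∃ u : R, IsUnit u ∧ n = u • v := by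
  obtain ⟨g, -, rfl, hnv⟩ :=
    H.exists_eq_mk_of_mk_eq_smul hn hn0 hv (hS.mem_locT_of_isUnit H.subset hU) h
  exact ⟨g, H.isUnit_of_eq_smul hn hn0 (hS.isUnit_mk_iff.1 hU) hnv, hnv⟩

theorem exists_eq_mk_of_mk_eq_mul {p q : R} {Θ : Localization hS.submonoid}
    (hp : p ∈ PrimPart S S' M) (hq : SPrimitive S q)
    (h : Localization.mk p (1 : hS.submonoid) = Θ * Localization.mk q 1) :
    ∃ g, Θ = Localization.mk g 1 ∧ p = g * q := by
  obtain ⟨g', δ, rfl⟩ := Localization.exists_eq_mk Θ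
  rw [Localization.mk_mul, mul_one, hS.mk_eq_mk_iff H.inter_zDiv_self] at h
  obtain ⟨g, rfl, hpg⟩ := H.exists_eq_mul_of_mul_eq_mul δ.2 hp hq (by simpa using h)
  exact ⟨g, (hS.mk_eq_mk_iff H.inter_zDiv_self).2 (by simp), hpg⟩

theorem mk_dvd_mk_iff {p q : R} (hp : p ∈ PrimPart S S' M) (hq : SPrimitive S q) :
    Localization.mk q (1 : hS.submonoid) ∣ Localization.mk p 1 ↔ q ∣ p := by
  refine ⟨fun ⟨Θ, h⟩ => ?_, fun h => by
    simpa only [Localization.mk_one_eq_algebraMap] using map_dvd (algebraMap R _) h⟩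
  obtain ⟨g, -, rfl⟩ := H.exists_eq_mk_of_mk_eq_mul hp hq (h.trans (mul_comm _ _))
  exact dvd_mul_left q g

theorem associated_mk_iff {p q : R} (hp : p ∈ PrimPart S S' M) (hq : q ∈ PrimPart S S' M) :
    Associated (Localization.mk p (1 : hS.submonoid)) (Localization.mk q 1) ↔ Associated p q := by
  refine ⟨fun ⟨U, hU⟩ => ?_, fun h => by
    simpa only [Localization.mk_one_eq_algebraMap] using h.map (algebraMap R _)⟩
  obtain ⟨g, hg, rfl⟩ := H.exists_eq_mk_of_mk_eq_mul hq hp.1 (hU.symm.trans (mul_comm _ _))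
  have hgu : IsUnit g :=
    H.isUnit_of_eq_mul hq.1 hq.2.2 (hS.isUnit_mk_iff.1 (hg ▸ U.isUnit)) rfl
  exact ((associated_isUnit_mul_left_iff hgu).2 (Associated.refl p)).symm

theorem forall_isUnit_mk_iff {p q : R} (hp : p ∈ PrimPart S S' M) (hq : SPrimitive S q) :
    (∀ Ξ, Localization.mk p (1 : hS.submonoid) = Ξ * Localization.mk q 1 → IsUnit Ξ) ↔
      ∀ s, p = s * q → IsUnit s := by
  refine ⟨fun h s hs => ?_, fun h Ξ hΞ => ?_⟩
  · have hs' := h (Localization.mk s 1) (by rw [Localization.mk_mul, mul_one, hs])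
    exact H.isUnit_of_eq_mul hp.1 hp.2.2 (hS.isUnit_mk_iff.1 hs') hs
  · obtain ⟨g, rfl, hpg⟩ := H.exists_eq_mk_of_mk_eq_mul hp hq hΞ
    simpa only [Localization.mk_one_eq_algebraMap] using (h g hpg).map (algebraMap R _)

theorem assocOf_mk_iff {k : Fin 3} {p q : R} (hp : p ∈ PrimPart S S' M)
    (hq : q ∈ PrimPart S S' M) :
    AssocOf k (Localization.mk p (1 : hS.submonoid)) (Localization.mk q 1) ↔ AssocOf k p q := by
  have hdvd := and_congr (H.mk_dvd_mk_iff hq hp.1) (H.mk_dvd_mk_iff hp hq.1)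
  have hp0 : p ≠ 0 := by rintro rfl; exact hp.2.2 fun m => zero_smul R m
  have hmk0 : Localization.mk p (1 : hS.submonoid) ≠ 0 := by
    rw [← Localization.mk_zero 1, Ne, hS.mk_eq_mk_iff H.inter_zDiv_self]
    simpa using hp0
  fin_cases k
  · exact hdvd
  · exact H.associated_mk_iff hp hq
  · refine and_congr hdvd ?_
    simp only [hp0, hmk0, false_and, false_or]
    exact H.forall_isUnit_mk_iff hp hq.1

end SplitSetting

namespace SplitSetting

variable {M : Type*} [AddCommGroup M] [Module R M] {S S' : Set R} {hS : Saturated S}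
  (H : SplitSetting hS S' M)
include H

theorem exists_primPart_of_mk_eq_mul {p : R} {X Y : Localization hS.submonoid} (hp : p ∈ PrimPart S S' M)
    (h : Localization.mk p 1 = X * Y) :
    ∃ q₁ ∈ PrimPart S S' M, ∃ q₂ ∈ PrimPart S S' M, ∃ V₁ V₂ : Localization hS.submonoid,
      IsUnit V₁ ∧ IsUnit V₂ ∧ X = V₁ * Localization.mk q₁ 1 ∧ Y = V₂ * Localization.mk q₂ 1 ∧
        p = q₁ * q₂ := by
  obtain ⟨x, σ, rfl⟩ := Localization.exists_eq_mk X
  obtain ⟨y, τ, rfl⟩ := Localization.exists_eq_mk Y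
  have hE : (σ * τ : R) * p = x * y := by
    rw [Localization.mk_mul, hS.mk_eq_mk_iff H.inter_zDiv_self] at h
    simpa using h
  have hστ : (σ * τ : R) ∈ S := hS.mul_mem σ.2 τ.2
  have hy : y ∣ (σ * τ : R) * p := Dvd.intro_left x hE.symm
  obtain ⟨s, hs, q₂, hq₂, rfl⟩ := H.exists_mul_mem_primPart
    (H.saturated'.mem_of_dvd hy (H.saturated'.mul_mem (H.subset hστ) hp.2.1))
    (fun hy' => mul_notMem_annSet H.inter_zDiv hστ hp.2.2 (mem_annSet_of_dvd hy hy'))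
  have hV₂ : IsUnit (Localization.mk s τ) := hS.isUnit_mk_iff.2 hs
  have hY : Localization.mk (s * q₂) τ = Localization.mk s τ * Localization.mk q₂ 1 := by
    rw [Localization.mk_mul, mul_one]
  obtain ⟨g, hg, rfl⟩ := H.exists_eq_mk_of_mk_eq_mul hp hq₂.1
    (Θ := Localization.mk x σ * Localization.mk s τ) (by rw [h, hY, mul_assoc])
  refine ⟨g, H.mem_primPart_of_dvd hp (dvd_mul_right g q₂), q₂, hq₂, _, _,
    hV₂.unit⁻¹.isUnit, hV₂, ?_, hY, rfl⟩
  rw [← hg, mul_left_comm, hV₂.val_inv_mul, mul_one]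

theorem irredOf_mk {k : Fin 3} {p : R} (hp : p ∈ PrimPart S S' M) (hpS : p ∉ S)
    (h : IrredOf k p) : IrredOf k (Localization.mk p (1 : hS.submonoid)) := by
  rw [irredOf_iff] at h ⊢
  refine ⟨fun hu => hpS (hS.isUnit_mk_iff.1 hu), fun X Y hXY => ?_⟩
  obtain ⟨q₁, hq₁, q₂, hq₂, V₁, V₂, hV₁, hV₂, rfl, rfl, rfl⟩ := H.exists_primPart_of_mk_eq_mul hp hXY
  exact (h.2 q₁ q₂ rfl).imp
    (fun h₁ => ((H.assocOf_mk_iff hp hq₁).2 h₁).isUnit_mul_right hV₁)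
    (fun h₂ => ((H.assocOf_mk_iff hp hq₂).2 h₂).isUnit_mul_right hV₂)

theorem irredOf_of_irredOf_mk {k : Fin 3} {p : R} (hp : p ∈ PrimPart S S' M)
    (h : IrredOf k (Localization.mk p (1 : hS.submonoid))) : IrredOf k p := by
  rw [irredOf_iff] at h ⊢
  refine ⟨fun hu => h.1 (hS.isUnit_mk_iff.2 (hS.mem_of_isUnit hu)), fun b c hbc => ?_⟩
  have hb := H.mem_primPart_of_dvd hp (Dvd.intro c hbc.symm)
  have hc := H.mem_primPart_of_dvd hp (Dvd.intro_left b hbc.symm)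
  exact (h.2 _ _ (by rw [Localization.mk_mul, mul_one, hbc])).imp
    (H.assocOf_mk_iff hp hb).1 (H.assocOf_mk_iff hp hc).1

theorem exists_eq_mul_mk_of_mem_locT {k : Fin 3} {A : Localization hS.submonoid}
    (hA : A ∈ locT hS S') (hAu : ¬ IsUnit A) (hAirr : IrredOf k A)
    {Z : LocalizedModule hS.submonoid M} (hAZ : A • Z ≠ 0) :
    ∃ q ∈ PrimPart S S' M, q ∉ S ∧ IrredOf k q ∧
      ∃ V, IsUnit V ∧ A = V * Localization.mk q 1 := by
  obtain ⟨a, ha, t, rfl⟩ := hA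
  have hann : a ∉ AnnSet R M := fun h => hAZ (by
    obtain ⟨z, τ, rfl⟩ := LocalizedModule.exists_eq_mk Z
    rw [LocalizedModule.mk_smul_mk, h z, LocalizedModule.zero_mk])
  obtain ⟨s, hs, q, hq, rfl⟩ := H.exists_mul_mem_primPart ha hann
  have hV : IsUnit (Localization.mk s t) := hS.isUnit_mk_iff.2 hs
  have hA : Localization.mk (s * q) t = Localization.mk s t * Localization.mk q 1 := by
    rw [Localization.mk_mul, mul_one]
  have hq' : Localization.mk q (1 : hS.submonoid) = ↑hV.unit⁻¹ * Localization.mk (s * q) t := by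
    rw [hA, ← mul_assoc, hV.val_inv_mul, one_mul]
  refine ⟨q, hq, fun h => hAu (hS.isUnit_mk_iff.2 (hS.mul_mem hs h)),
    H.irredOf_of_irredOf_mk hq ?_, _, hV, hA⟩
  rw [hq']
  exact hAirr.isUnit_mul hV.unit⁻¹.isUnit

theorem primOf_mk {k : Fin 3} {n : M} (hn0 : n ≠ 0) (hn : PrimOf S' k n) :
    PrimOf (locT hS S') k (LocalizedModule.mk n (1 : hS.submonoid)) := by
  have hnS := H.sPrimitive_of_primOf hn0 hn
  have hT : ∀ {W : Localization hS.submonoid}, IsUnit W → W ∈ locT hS S' :=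
    hS.mem_locT_of_isUnit H.subset
  have hTmul : ∀ {X Y : Localization hS.submonoid}, X ∈ locT hS S' → Y ∈ locT hS S' →
      X * Y ∈ locT hS S' := hS.mul_mem_locT H.saturated'
  have hdiv : ∀ Θ ∈ locT hS S', ∀ X, LocalizedModule.mk n (1 : hS.submonoid) = Θ • X →
      ∃ W : Localization hS.submonoid, IsUnit W ∧ ∃ v : M, SPrimitive S v ∧ v ≠ 0 ∧
        X = W • LocalizedModule.mk v (1 : hS.submonoid) ∧ ∃ g ∈ S', n = g • v := by
    intro Θ hΘ X h
    have hX0 : X ≠ 0 := by rintro rfl; exact H.mk_ne_zero hn0 (by rw [h, smul_zero])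
    obtain ⟨W, hW, v, hv, hv0, rfl⟩ := H.exists_isUnit_smul_mk hX0
    obtain ⟨g, hg, -, hnv⟩ :=
      H.exists_eq_mk_of_mk_eq_smul hnS hn0 hv (hTmul hΘ (hT hW)) (by rw [h, smul_smul])
    exact ⟨W, hW, v, hv, hv0, rfl, g, hg, hnv⟩
  fin_cases k
  · intro Θ hΘ X h
    obtain ⟨W, hW, v, -, -, rfl, g, hg, hnv⟩ := hdiv Θ hΘ X h
    obtain ⟨⟨σ, hσ, rfl⟩, -⟩ := hn g hg v hnv
    exact ⟨⟨W * Localization.mk σ 1, hTmul (hT hW) ⟨σ, hσ, 1, rfl⟩,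
      by rw [LocalizedModule.mk_smul_one, smul_smul]⟩, ⟨Θ, hΘ, h⟩⟩
  · intro Θ hΘ X h
    obtain ⟨W, hW, v, -, -, rfl, g, hg, hnv⟩ := hdiv Θ hΘ X h
    obtain ⟨U, hU, -, rfl⟩ := hn g hg v hnv
    have hWU : IsUnit (W * Localization.mk U 1) :=
      hW.mul (hS.isUnit_mk_iff.2 (hS.mem_of_isUnit hU))
    exact ⟨_, hWU, hT hWU, by rw [LocalizedModule.mk_smul_one, smul_smul]⟩
  · intro Θ hΘ X h
    obtain ⟨W, hW, v, hv, hv0, rfl, g, hg, hnv⟩ := hdiv Θ hΘ X h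
    obtain ⟨⟨⟨σ, hσ, rfl⟩, -⟩, hσn⟩ := hn g hg v hnv
    refine ⟨⟨⟨W * Localization.mk σ 1, hTmul (hT hW) ⟨σ, hσ, 1, rfl⟩,
      by rw [LocalizedModule.mk_smul_one, smul_smul]⟩, ⟨Θ, hΘ, h⟩⟩, Or.inr fun Θ' hΘ' hX => ?_⟩
    obtain ⟨g', hg'S, hg', hσg'⟩ := H.exists_eq_mk_of_mk_eq_smul hv hv0 hnS
      (hTmul (hT hW.unit⁻¹.isUnit) hΘ')
      (by rw [mul_smul, ← hX, smul_smul, hW.val_inv_mul, one_smul])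
    rcases hσn with ⟨h0, -⟩ | hσn
    · exact absurd h0 hv0
    have hΘ'eq : Θ' = W * Localization.mk g' 1 := by
      rw [← hg', ← mul_assoc, hW.mul_val_inv, one_mul]
    rw [hΘ'eq]
    exact hW.mul (hS.isUnit_mk_iff.2 (hS.mem_of_isUnit (hσn g' hg'S hσg')))

end SplitSetting

namespace SplitSetting

variable {M : Type*} [AddCommGroup M] [Module R M] {S S' : Set R} {hS : Saturated S}
  (H : SplitSetting hS S' M)
include H

theorem primOf_locT_isUnit_smul {k : Fin 3} {W : Localization hS.submonoid} (hW : IsUnit W)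
    {X : LocalizedModule hS.submonoid M} (hX : PrimOf (locT hS S') k X) :
    PrimOf (locT hS S') k (W • X) :=
  PrimOf.isUnit_smul (fun _ hx _ hy => hS.mul_mem_locT H.saturated' hx hy)
    (fun _ => hS.mem_locT_of_isUnit H.subset) hW hX

theorem primOf_of_primOf_mk {k : Fin 3} {v : M} (hv : SPrimitive S v) (hv0 : v ≠ 0)
    (h : PrimOf (locT hS S') k (LocalizedModule.mk v (1 : hS.submonoid))) : PrimOf S' k v := by
  have hdiv : ∀ s n, v = s • n → SPrimitive S n ∧ n ≠ 0 ∧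
      LocalizedModule.mk v (1 : hS.submonoid) =
        Localization.mk s 1 • LocalizedModule.mk n (1 : hS.submonoid) := fun s n hvn =>
    ⟨H.sPrimitive_of_eq_smul hv hv0 hvn, by rintro rfl; exact hv0 (by rw [hvn, smul_zero]),
      by rw [hvn, LocalizedModule.mk_smul_one]⟩
  fin_cases k
  · intro s hs n hvn
    obtain ⟨hn, hn0, hmk⟩ := hdiv s n hvn
    obtain ⟨⟨Θ, hΘ, hnΘ⟩, -⟩ := h _ ⟨s, hs, 1, rfl⟩ _ hmk
    obtain ⟨g, hg, -, hng⟩ := H.exists_eq_mk_of_mk_eq_smul hn hn0 hv hΘ hnΘ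
    exact ⟨⟨g, hg, hng⟩, ⟨s, hs, hvn⟩⟩
  · intro s hs n hvn
    obtain ⟨hn, hn0, hmk⟩ := hdiv s n hvn
    obtain ⟨U, hU, -, hnU⟩ := h _ ⟨s, hs, 1, rfl⟩ _ hmk
    obtain ⟨u, hu, hnu⟩ := H.exists_isUnit_of_mk_eq_smul hn hn0 hv hU hnU
    exact ⟨u, hu, H.saturated'.mem_of_isUnit hu, hnu⟩
  · intro s hs n hvn
    obtain ⟨hn, hn0, hmk⟩ := hdiv s n hvn
    obtain ⟨⟨⟨Θ, hΘ, hnΘ⟩, -⟩, hrest⟩ := h _ ⟨s, hs, 1, rfl⟩ _ hmk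
    obtain ⟨g, hg, -, hng⟩ := H.exists_eq_mk_of_mk_eq_smul hn hn0 hv hΘ hnΘ
    refine ⟨⟨⟨g, hg, hng⟩, ⟨s, hs, hvn⟩⟩, Or.inr fun σ hσ hnσ => ?_⟩
    rcases hrest with ⟨h0, -⟩ | hrest
    · exact absurd h0 (H.mk_ne_zero hn0)
    have hσS : σ ∈ S := hS.isUnit_mk_iff.1
      (hrest _ ⟨σ, hσ, 1, rfl⟩ (by rw [hnσ, LocalizedModule.mk_smul_one]))
    exact H.isUnit_of_eq_smul hn hn0 hσS hnσ

theorem exists_split_of_isABFactorization {kα kβ : Fin 3} {m n : M} {l : List R} (hm : m ≠ 0)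
    (h : IsABFactorization S' kα kβ m l n) :
    ∃ l₁ l₂ : List R, IsSFactorization S m l₁ (l₂.prod • n) ∧ (∀ a ∈ l₁, IrredOf kα a) ∧
      ∀ a ∈ l₂, a ∈ PrimPart S S' M ∧ a ∉ S ∧ IrredOf kα a := by
  classical
  obtain ⟨⟨hl, rfl⟩, hirr, -⟩ := h
  have hprod := List.prod_map_filter_mul_prod_map_filter_not (· ∈ S) id l
  simp only [List.map_id] at hprod
  refine ⟨l.filter (· ∈ S), l.filter (· ∉ S), ⟨fun a ha => ?_, by rw [← hprod, mul_smul]⟩,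
    fun a ha => hirr a (List.mem_of_mem_filter ha), fun a ha => ?_⟩
  · rw [List.mem_filter, decide_eq_true_iff] at ha
    exact ⟨ha.2, (hl a ha.1).2⟩
  · rw [List.mem_filter, decide_eq_true_iff] at ha
    refine ⟨H.mem_primPart_of_irredOf (hl a ha.1).1 ha.2 (fun hann => hm ?_) (hirr a ha.1), ha.2,
      hirr a ha.1⟩
    rw [mem_annSet_of_dvd (List.dvd_prod ha.1) hann n]

theorem abAtomicModule_of_superset {kα kβ : Fin 3} (h : ABAtomicModule S' M kα kβ) :
    ABAtomicModule S M kα 0 := by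
  intro m hm
  obtain ⟨l, n, hf⟩ := h m hm
  obtain ⟨l₁, l₂, hf₁, hirr, hl₂⟩ := H.exists_split_of_isABFactorization hm hf
  have h0 : l₂.prod • n ≠ 0 := by rintro h0; exact hm (by rw [hf₁.2, h0, smul_zero])
  have hn0 : n ≠ 0 := by rintro rfl; exact h0 (smul_zero _)
  exact ⟨l₁, l₂.prod • n, hf₁, hirr, H.sPrimitive_list_prod_smul (fun a ha => (hl₂ a ha).1.1)
    (H.sPrimitive_of_primOf hn0 hf.2.2) h0⟩

theorem abAtomicModule_localizedModule {kα kβ : Fin 3} (h : ABAtomicModule S' M kα kβ) :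
    ABAtomicModule (locT hS S') (LocalizedModule hS.submonoid M) kα kβ := by
  intro X hX
  obtain ⟨m, σ, rfl⟩ := LocalizedModule.exists_eq_mk X
  have hm : m ≠ 0 := by rintro rfl; exact hX (LocalizedModule.zero_mk σ)
  obtain ⟨l, n, hf⟩ := h m hm
  obtain ⟨l₁, l₂, ⟨hl₁, rfl⟩, -, hl₂⟩ := H.exists_split_of_isABFactorization hm hf
  have hn0 : n ≠ 0 := by rintro rfl; exact hm (by rw [smul_zero, smul_zero])
  have hW : IsUnit (Localization.mk l₁.prod σ) :=
    hS.isUnit_mk_iff.2 (hS.submonoid.list_prod_mem fun a ha => (hl₁ a ha).1)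
  refine ⟨l₂.map fun a => Localization.mk a 1,
    Localization.mk l₁.prod σ • LocalizedModule.mk n 1, ⟨?_, ?_⟩, ?_,
    H.primOf_locT_isUnit_smul hW (H.primOf_mk hn0 hf.2.2)⟩
  · simp only [List.mem_map]
    rintro _ ⟨a, ha, rfl⟩
    exact ⟨⟨a, (hl₂ a ha).1.2.1, 1, rfl⟩, fun hu => (hl₂ a ha).2.1 (hS.isUnit_mk_iff.1 hu)⟩
  · rw [Localization.list_prod_map_mk, LocalizedModule.mk_smul_mk, LocalizedModule.mk_smul_mk,
      one_mul, mul_one, smul_comm]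
  · simp only [List.mem_map]
    rintro _ ⟨a, ha, rfl⟩
    exact H.irredOf_mk (hl₂ a ha).1 (hl₂ a ha).2.1 (hl₂ a ha).2.2

theorem exists_prod_eq_of_forall_mem_locT {k : Fin 3} (L : List (Localization hS.submonoid))
    (hL : ∀ A ∈ L, A ∈ locT hS S' ∧ ¬ IsUnit A ∧ IrredOf k A)
    {Z : LocalizedModule hS.submonoid M} (h0 : L.prod • Z ≠ 0) :
    ∃ lp : List R, (∀ q ∈ lp, q ∈ PrimPart S S' M ∧ q ∉ S ∧ IrredOf k q) ∧
      ∃ W, IsUnit W ∧ L.prod = W * Localization.mk lp.prod 1 := by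
  induction L with
  | nil => exact ⟨[], by simp, 1, isUnit_one, by simp [Localization.mk_one]⟩
  | cons A L ih =>
    rw [List.forall_mem_cons] at hL
    rw [List.prod_cons, mul_smul] at h0
    obtain ⟨lp, hlp, W, hW, hLW⟩ := ih hL.2 fun h => h0 (by rw [h, smul_zero])
    obtain ⟨q, hq, hqS, hqirr, V, hV, rfl⟩ :=
      H.exists_eq_mul_mk_of_mem_locT hL.1.1 hL.1.2.1 hL.1.2.2 h0
    refine ⟨q :: lp, List.forall_mem_cons.2 ⟨⟨hq, hqS, hqirr⟩, hlp⟩, V * W, hV.mul hW, ?_⟩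
    have hmk : Localization.mk (q * lp.prod) (1 : hS.submonoid) =
        Localization.mk q 1 * Localization.mk lp.prod 1 := by
      rw [Localization.mk_mul, mul_one]
    rw [List.prod_cons, List.prod_cons, hLW, hmk]
    ring

theorem abAtomicModule_of_localizedModule {kα kβ : Fin 3} (h₁ : ABAtomicModule S M kα 0)
    (h₂ : ABAtomicModule (locT hS S') (LocalizedModule hS.submonoid M) kα kβ) :
    ABAtomicModule S' M kα kβ := by
  intro m hm
  obtain ⟨la, n₀, ⟨hla, rfl⟩, hlairr, hn₀⟩ := h₁ m hm
  have hn₀0 : n₀ ≠ 0 := by rintro rfl; exact hm (smul_zero _)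
  obtain ⟨L, X, ⟨hL, hLX⟩, hLirr, hX⟩ := h₂ _ (H.mk_ne_zero hn₀0)
  obtain ⟨lp, hlp, W, hW, hLW⟩ := H.exists_prod_eq_of_forall_mem_locT L
    (fun A hA => ⟨(hL A hA).1, (hL A hA).2, hLirr A hA⟩) (hLX ▸ H.mk_ne_zero hn₀0)
  rw [hLW, mul_comm, mul_smul] at hLX
  have hWX0 : W • X ≠ 0 := by rintro h; exact H.mk_ne_zero hn₀0 (by rw [hLX, h, smul_zero])
  obtain ⟨W', hW', v, hv, hv0, hWX⟩ := H.exists_isUnit_smul_mk hWX0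
  have hvβ : PrimOf S' kβ v := by
    refine H.primOf_of_primOf_mk hv hv0 ?_
    rw [show LocalizedModule.mk v 1 = (↑hW'.unit⁻¹ * W) • X by
      rw [mul_smul, hWX, smul_smul, hW'.val_inv_mul, one_smul]]
    exact H.primOf_locT_isUnit_smul (hW'.unit⁻¹.isUnit.mul hW) hX
  rw [hWX, smul_comm (Localization.mk lp.prod 1) W', ← LocalizedModule.mk_smul_one] at hLX
  have hPv0 : lp.prod • v ≠ 0 := by
    rintro h
    exact H.mk_ne_zero hn₀0 (by rw [hLX, h, LocalizedModule.zero_mk, smul_zero])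
  obtain ⟨u, hu, rfl⟩ := H.exists_isUnit_of_mk_eq_smul hn₀ hn₀0
    (H.sPrimitive_list_prod_smul (fun q hq => (hlp q hq).1.1) hv hPv0) hW' hLX
  refine ⟨la ++ lp, u • v, ⟨fun a ha => ?_, by rw [List.prod_append, mul_smul, smul_comm u]⟩,
    fun a ha => ?_,
    PrimOf.isUnit_smul H.saturated'.2.1 (fun _ => H.saturated'.mem_of_isUnit) hu hvβ⟩
  · rcases List.mem_append.1 ha with ha | ha
    · exact ⟨H.subset (hla a ha).1, (hla a ha).2⟩
    · exact ⟨(hlp a ha).1.2.1, fun hu => (hlp a ha).2.1 (hS.mem_of_isUnit hu)⟩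
  · rcases List.mem_append.1 ha with ha | ha
    exacts [hlairr a ha, (hlp a ha).2.2]

end SplitSetting

theorem statement10_general {R : Type*} [CommRing R] {M : Type*} [AddCommGroup M] [Module R M]
    (S S' : Set R) (hS : Saturated S) (hS' : Saturated S') (hSS' : S ⊆ S')
    (hsplit : Splits S (Set.univ : Set M))
    (hcompact : CompactlySAtomic S (S' \ AnnSet R M))
    (hZM : S ∩ ZDiv R M = ∅) (hZR : S ∩ ZDiv R R = ∅) (kα kβ : Fin 3) :
    ABAtomicModule S' M kα kβ ↔
      (ABAtomicModule S M kα (0 : Fin 3) ∧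
       ABAtomicModule (locT hS S') (LocalizedModule hS.submonoid M) kα kβ) := by
  have H : SplitSetting hS S' M := ⟨hS', hSS', hsplit, hcompact, hZM, hZR⟩
  exact ⟨fun h => ⟨H.abAtomicModule_of_superset h, H.abAtomicModule_localizedModule h⟩,
    fun h => H.abAtomicModule_of_localizedModule h.1 h.2⟩

theorem statement10 {R : Type*} [CommRing R] {M : Type*} [AddCommGroup M] [Module R M]
    [Nontrivial M] (S S' : Set R) (hS : Saturated S) (hS' : Saturated S') (hSS' : S ⊆ S')
    (hsplit : Splits S (Set.univ : Set M))
    (hcompact : CompactlySAtomic S (S' \ AnnSet R M))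
    (hZM : S ∩ ZDiv R M = ∅) (hZR : S ∩ ZDiv R R = ∅) (kα kβ : Fin 3) :
    ABAtomicModule S' M kα kβ ↔
      (ABAtomicModule S M kα (0 : Fin 3) ∧
       ABAtomicModule (locT hS S') (LocalizedModule hS.submonoid M) kα kβ) :=
  statement10_general S S' hS hS' hSS' hsplit hcompact hZM hZR kα kβ

end FactorizationPaper
end

section
/- Let S ⊆ S' be saturated multiplicatively closed subsets of R. Suppose M is semi-S-factorable and S ∩ Z(M) = ∅. If M is an S'-UFM, an S'-HFM, or an S'-FFM, then M is an S-BFM. Moreover, if M is an S-BFM, then R \ Ann(M) is compactly S-atomic (as a subset of the R-module R). -/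
namespace FactorizationPaper

variable {R : Type*} [CommRing R]

/-!
In a semi-`S`-factorable module an `S`-primitive `r ≠ 0` has only units of `S` as `S`-divisors:
if `r = c • w` and `w = e • w₁` is compact, then `r = (c e) • w₁` and `r = 1 • r` force `c e ∼ 1`.
The same then holds for `S'`-primitive elements, so when an `S`-factorization
`m = s₁ ⋯ s_k • n` is refined step by step into an `S'`-atomic one, each `sᵢ` contributes at least
one irreducible factor. Bounds on the lengths of `S'`-atomic factorizations, which `S'`-UFMs,
`S'`-HFMs and `S'`-FFMs all have, therefore bound the lengths of `S`-factorizations.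

Conversely, if `a • m ≠ 0`, every `S`-factorization of `a` in `R` induces one of `a • m`, so the
lengths of `S`-factorizations of `a` are bounded; one of maximal length has an `S`-primitive
remainder, which is a compact `S`-atomic factorization of `a`.
-/

section BoundedFactorization

variable {S S' : Set R} {N : Type*} [AddCommGroup N] [Module R N]

lemma Saturated.sAssoc_smul_of_isUnit (hS : Saturated S) {s : R} (hs : s ∈ S) (hu : IsUnit s)
    (n : N) : SAssoc S n (s • n) := by
  obtain ⟨u, rfl⟩ := hu
  have hinv : (↑u⁻¹ : R) ∈ S := (hS.2.2 u (↑u⁻¹) (by rw [Units.mul_inv]; exact hS.1)).2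
  exact ⟨⟨↑u⁻¹, hinv, by rw [smul_smul, Units.inv_mul, one_smul]⟩, ⟨u, hs, rfl⟩⟩

lemma SemiSFactorable.isUnit_of_sPrimitive_eq_smul (hM : SemiSFactorable S (Set.univ : Set N))
    (hS : Saturated S) {r w : N} {c : R} (hr : r ≠ 0) (hprim : SPrimitive S r) (hc : c ∈ S)
    (hrw : r = c • w) : IsUnit c := by
  have hw : w ≠ 0 := by rintro rfl; exact hr (by rw [hrw, smul_zero])
  obtain ⟨e, w₁, he, hw₁, rfl⟩ := hM.1 w (Set.mem_univ w) hw
  have hce : IsCompactFactorization S r (c * e) w₁ :=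
    ⟨hS.2.1 c hc e he, hw₁, by rw [hrw, smul_smul]⟩
  have hone : IsCompactFactorization S r 1 r := ⟨hS.1, hprim, (one_smul R r).symm⟩
  obtain ⟨-, x, -, hx⟩ := hM.2 r (Set.mem_univ r) hr _ _ _ _ hce hone
  rw [smul_eq_mul] at hx
  exact IsUnit.of_mul_eq_one (e * x) (by rw [hx]; ring)

lemma SemiSFactorable.isUnit_of_sPrimitive_of_subset (hM : SemiSFactorable S (Set.univ : Set N))
    (hS : Saturated S) (hSS' : S ⊆ S') {z n : N} {s : R} (hz : z ≠ 0) (hprim : SPrimitive S' z)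
    (hs : s ∈ S) (hzn : z = s • n) : IsUnit s := by
  have hn : n ≠ 0 := by rintro rfl; exact hz (by rw [hzn, smul_zero])
  obtain ⟨e, n₁, he, hn₁, rfl⟩ := hM.1 n (Set.mem_univ n) hn
  have hse : s * e ∈ S := hS.2.1 s hs e he
  have hzn₁ : z = (s * e) • n₁ := by rw [hzn, smul_smul]
  have hn₁0 : n₁ ≠ 0 := by rintro rfl; exact hz (by rw [hzn₁, smul_zero])
  obtain ⟨⟨t, -, ht⟩, -⟩ := hprim (s * e) (hSS' hse) n₁ hzn₁
  have hn₁_eq : n₁ = (s * e) • t • n₁ := by rw [smul_comm, ← hzn₁, ← ht]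
  exact isUnit_of_mul_isUnit_left (hM.isUnit_of_sPrimitive_eq_smul hS hn₁0 hn₁ hse hn₁_eq)

lemma IsSAtomicFactorization.append {y r p : N} {s : R} {v u : List R}
    (hv : IsSAtomicFactorization S y v r) (hu : IsSAtomicFactorization S (s • r) u p) :
    IsSAtomicFactorization S (s • y) (v ++ u) p := by
  refine ⟨⟨fun t ht => ?_, ?_⟩, fun t ht => ?_, hu.2.2⟩
  · rcases List.mem_append.1 ht with h | h
    exacts [hv.1.1 t h, hu.1.1 t h]
  · rw [List.prod_append, mul_smul, ← hu.1.2, hv.1.2, smul_comm]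
  · rcases List.mem_append.1 ht with h | h
    exacts [hv.2.1 t h, hu.2.1 t h]

lemma exists_sAtomicFactorization_length_ge (hS : Saturated S) (hSS' : S ⊆ S')
    (hM : SemiSFactorable S (Set.univ : Set N)) (hAt : SAtomicModule S' N) {l : List R} :
    ∀ {m n : N}, m ≠ 0 → IsSFactorization S m l n →
      ∃ l' n', IsSAtomicFactorization S' m l' n' ∧ l.length ≤ l'.length := by
  induction l with
  | nil =>
    intro m _ hm _
    obtain ⟨l', n', h⟩ := hAt m hm
    exact ⟨l', n', h, Nat.zero_le _⟩
  | cons s l ih =>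
    intro m n hm ⟨hl, hmn⟩
    obtain ⟨hsS, hsu⟩ := hl s List.mem_cons_self
    have hm' : m = s • l.prod • n := by rw [hmn, List.prod_cons, mul_smul]
    have hy : l.prod • n ≠ 0 := fun h => hm (by rw [hm', h, smul_zero])
    obtain ⟨v, r, hv, hlv⟩ := ih hy ⟨fun t ht => hl t (List.mem_cons_of_mem s ht), rfl⟩
    have hsr : s • r ≠ 0 := fun h => hm (by rw [hm', hv.1.2, smul_comm, h, smul_zero])
    obtain ⟨u, p, hu⟩ := hAt (s • r) hsr
    have hu_ne : u ≠ [] := by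
      rintro rfl
      have hsrp : s • r = p := by simpa using hu.1.2
      exact hsu (hM.isUnit_of_sPrimitive_of_subset hS hSS' hsr (hsrp ▸ hu.2.2) hsS rfl)
    refine ⟨v ++ u, p, hm' ▸ hv.append hu, ?_⟩
    have := List.length_pos_of_ne_nil hu_ne
    rw [List.length_cons, List.length_append]
    omega

variable (S N) in
def AtomicLengthBounded : Prop :=
  ∀ m : N, m ≠ 0 → ∃ B : ℕ, ∀ l n, IsSAtomicFactorization S m l n → l.length ≤ B

lemma SUFM.sHFM (h : SUFM S N) : SHFM S N :=
  ⟨h.1, fun m hm l n l' n' hf hf' => (h.2 m hm l n l' n' hf hf').1⟩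

lemma SHFM.atomicLengthBounded (h : SHFM S N) : AtomicLengthBounded S N := by
  intro m hm
  obtain ⟨l₀, n₀, h₀⟩ := h.1 m hm
  exact ⟨l₀.length, fun l n hf => (h.2 m hm l n l₀ n₀ hf h₀).le⟩

lemma SFFM.atomicLengthBounded (h : SFFM S N) : AtomicLengthBounded S N := by
  intro m hm
  obtain ⟨Fs, hFin, hcov⟩ := h.2 m hm
  obtain ⟨B, hB⟩ := (hFin.image fun p => p.1.length).bddAbove
  refine ⟨B, fun l n hf => ?_⟩
  obtain ⟨p, hp, hiso⟩ := hcov l n hf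
  exact hiso.1.le.trans (hB ⟨p, hp, rfl⟩)

lemma sBFM_of_atomicLengthBounded (hS : Saturated S) (hSS' : S ⊆ S')
    (hM : SemiSFactorable S (Set.univ : Set N)) (hAt : SAtomicModule S' N)
    (hB : AtomicLengthBounded S' N) : SBFM S N := by
  intro m hm
  obtain ⟨B, hB⟩ := hB m hm
  refine ⟨B, fun l n hf => ?_⟩
  obtain ⟨l', n', hf', hle⟩ := exists_sAtomicFactorization_length_ge hS hSS' hM hAt hm hf
  exact hle.trans (hB l' n' hf')

lemma exists_isCompactFactorization_of_bddAbove (hS : Saturated S) {m : N}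
    (hB : BddAbove {k | ∃ l n, IsSFactorization S m l n ∧ l.length = k}) :
    ∃ s n, IsCompactFactorization S m s n := by
  have hne : {k | ∃ l n, IsSFactorization S m l n ∧ l.length = k}.Nonempty :=
    ⟨0, [], m, ⟨by simp, by simp⟩, rfl⟩
  obtain ⟨l, n, ⟨hl, hmn⟩, hlen⟩ := Nat.sSup_mem hne hB
  refine ⟨l.prod, n, hS.submonoid.list_prod_mem fun s hs => (hl s hs).1,
    fun s hs n' hnn' => ?_, hmn⟩
  by_cases hsu : IsUnit s
  · rw [hnn']
    exact hS.sAssoc_smul_of_isUnit hs hsu n'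
  · have hfac : IsSFactorization S m (s :: l) n' := by
      refine ⟨fun t ht => ?_, by rw [hmn, hnn', List.prod_cons, mul_smul, smul_comm]⟩
      rcases List.mem_cons.1 ht with rfl | h
      exacts [⟨hs, hsu⟩, hl t h]
    have hle := le_csSup hB ⟨s :: l, n', hfac, rfl⟩
    rw [List.length_cons, ← hlen] at hle
    omega

lemma IsSFactorization.smul {a n : R} {l : List R} (h : IsSFactorization S a l n) (m : N) :
    IsSFactorization S (a • m) l (n • m) :=
  ⟨h.1, by rw [h.2, smul_assoc]⟩

lemma SBFM.compactlySAtomic_annSet_compl (hS : Saturated S) (hB : SBFM S N) :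
    CompactlySAtomic S (AnnSet R N)ᶜ := by
  intro a ha _
  obtain ⟨m, hm⟩ : ∃ m : N, a • m ≠ 0 := by simpa [AnnSet] using ha
  obtain ⟨B, hB⟩ := hB (a • m) hm
  exact exists_isCompactFactorization_of_bddAbove hS
    ⟨B, by rintro _ ⟨l, n, hf, rfl⟩; exact hB l _ (hf.smul m)⟩

end BoundedFactorization

theorem statement11_general {R : Type*} [CommRing R] {M : Type*} [AddCommGroup M] [Module R M]
    (S S' : Set R) (hS : Saturated S) (hSS' : S ⊆ S')
    (hM : SemiSFactorable S (Set.univ : Set M)) :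
    ((SUFM S' M ∨ SHFM S' M ∨ SFFM S' M) → SBFM S M) ∧
    (SBFM S M → CompactlySAtomic S ((AnnSet R M)ᶜ : Set R)) := by
  refine ⟨fun h => ?_, fun hB => hB.compactlySAtomic_annSet_compl hS⟩
  obtain ⟨hAt, hB⟩ : SAtomicModule S' M ∧ AtomicLengthBounded S' M := by
    rcases h with h | h | h
    exacts [⟨h.1, h.sHFM.atomicLengthBounded⟩, ⟨h.1, h.atomicLengthBounded⟩,
      ⟨h.1, h.atomicLengthBounded⟩]
  exact sBFM_of_atomicLengthBounded hS hSS' hM hAt hB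

theorem statement11 {R : Type*} [CommRing R] {M : Type*} [AddCommGroup M] [Module R M]
    [Nontrivial M] (S S' : Set R) (hS : Saturated S) (hS' : Saturated S') (hSS' : S ⊆ S')
    (hM : SemiSFactorable S (Set.univ : Set M)) (hZ : S ∩ ZDiv R M = ∅) :
    ((SUFM S' M ∨ SHFM S' M ∨ SFFM S' M) → SBFM S M) ∧
    (SBFM S M → CompactlySAtomic S ((AnnSet R M)ᶜ : Set R)) :=
  statement11_general S S' hS hSS' hM

end FactorizationPaper
end
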